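/- arXiv:2310.03601 — 3 statements merged into one kernel-verified Lean document; each statement's English description precedes it below -/
import Mathlib

section
/- Every finite 2k-edge-connected multigraph has an orientation in which, from any vertex v to any other vertex w, there exist k arc-disjoint directed paths from v to w. -/
namespace NW
open Classical
noncomputable section

/-- A multigraph on vertex type `V` with edge type `E`: each edge has two endpoints
(given with an arbitrary reference direction). -/
structure Multigraph (V : Type) (E : Type) where
  fst : E → V
  snd : E → V

namespace Multigraph

variable {V E : Type}

/-- Source of an oriented step `(e, b)`: traversing `e` forwards if `b = true`. -/
def src (G : Multigraph V E) (s : E × Bool) : V := if s.2 then G.fst s.1 else G.snd s.1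

/-- Target of an oriented step. -/
def dst (G : Multigraph V E) (s : E × Bool) : V := if s.2 then G.snd s.1 else G.fst s.1

/-- `l` is a walk from `x` to `y` (a list of oriented steps). -/
def IsWalk (G : Multigraph V E) (x y : V) (l : List (E × Bool)) : Prop :=
  l.Chain' (fun s t => G.dst s = G.src t) ∧
  ((l = [] ∧ x = y) ∨
    (∃ s t, l.head? = some s ∧ l.getLast? = some t ∧ G.src s = x ∧ G.dst t = y))

/-- A trail: a walk with pairwise distinct edges. -/
def IsTrail (G : Multigraph V E) (x y : V) (l : List (E × Bool)) : Prop :=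
  G.IsWalk x y l ∧ (l.map Prod.fst).Nodup

/-- There exist `m` pairwise edge-disjoint `x`–`y` paths. -/
def ConnAtLeast (G : Multigraph V E) (x y : V) (m : ℕ) : Prop :=
  ∃ f : Fin m → List (E × Bool),
    (∀ i, G.IsTrail x y (f i)) ∧
    ∀ i j, i ≠ j → ((f i).map Prod.fst).Disjoint ((f j).map Prod.fst)

/-- The local edge-connectivity `λ(x,y)`. -/
noncomputable def lam (G : Multigraph V E) (x y : V) : ℕ :=
  sSup {m | G.ConnAtLeast x y m}

/-- `λ*(x,y)`: greatest even number not exceeding `λ(x,y)`. -/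
noncomputable def lamStar (G : Multigraph V E) (x y : V) : ℕ :=
  2 * (G.lam x y / 2)

/-- Edge boundary `δ(X)`. -/
def cut (G : Multigraph V E) (X : Set V) : Set E :=
  {e | (G.fst e ∈ X ∧ G.snd e ∉ X) ∨ (G.fst e ∉ X ∧ G.snd e ∈ X)}

/-- `E(X,Y)`: edges with one end in `X` and the other in `Y`. -/
def between (G : Multigraph V E) (X Y : Set V) : Set E :=
  {e | (G.fst e ∈ X ∧ G.snd e ∈ Y) ∨ (G.fst e ∈ Y ∧ G.snd e ∈ X)}

/-- Degree of a vertex. -/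
noncomputable def deg (G : Multigraph V E) (v : V) : ℕ :=
  {e | G.fst e = v}.ncard + {e | G.snd e = v}.ncard

/-- `e` is incident with `v`. -/
def Inc (G : Multigraph V E) (e : E) (v : V) : Prop := G.fst e = v ∨ G.snd e = v

/-- `k`-edge-connectedness: every nonempty proper vertex set has boundary of size at least `k`. -/
def EdgeConnected (G : Multigraph V E) (k : ℕ) : Prop :=
  ∀ X : Set V, X.Nonempty → Xᶜ.Nonempty → k ≤ (G.cut X).ncard

/-- Tail of edge `e` under the orientation `o`. -/
def tailO (G : Multigraph V E) (o : E → Bool) (e : E) : V := if o e then G.fst e else G.snd e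

/-- Head of edge `e` under the orientation `o`. -/
def headO (G : Multigraph V E) (o : E → Bool) (e : E) : V := if o e then G.snd e else G.fst e

/-- Directed walk from `x` to `y` in the orientation `o`. -/
def IsDiWalk (G : Multigraph V E) (o : E → Bool) (x y : V) (l : List E) : Prop :=
  l.Chain' (fun e f => G.headO o e = G.tailO o f) ∧
  ((l = [] ∧ x = y) ∨
    (∃ e f, l.head? = some e ∧ l.getLast? = some f ∧ G.tailO o e = x ∧ G.headO o f = y))

/-- There exist `m` pairwise arc-disjoint directed paths from `x` to `y`. -/
def DiConnAtLeast (G : Multigraph V E) (o : E → Bool) (x y : V) (m : ℕ) : Prop :=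
  ∃ g : Fin m → List E,
    (∀ i, G.IsDiWalk o x y (g i) ∧ (g i).Nodup) ∧
    ∀ i j, i ≠ j → (g i).Disjoint (g j)

/-- A well-balanced orientation. -/
def WellBalanced (G : Multigraph V E) (o : E → Bool) : Prop :=
  ∀ x y : V, x ≠ y → G.DiConnAtLeast o x y (G.lamStar x y / 2)

def Reachable (G : Multigraph V E) (x y : V) : Prop := ∃ l, G.IsWalk x y l

def Connected (G : Multigraph V E) : Prop := ∀ x y, G.Reachable x y

/-- `e` is a bridge: its endpoints cannot be joined avoiding `e`. -/
def IsBridge (G : Multigraph V E) (e : E) : Prop :=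
  ¬ ∃ l, G.IsWalk (G.fst e) (G.snd e) l ∧ e ∉ l.map Prod.fst

/-- The endpoint of `e` other than `s`. -/
def other (G : Multigraph V E) (s : V) (e : E) : V :=
  if G.fst e = s then G.snd e else G.fst e

/-- Lifting the edges `e1, e2` at `s`: delete both, add a new edge (reusing the name `e1`)
joining their other endpoints. -/
def lift (G : Multigraph V E) (s : V) (e1 e2 : E) : Multigraph V {e : E // e ≠ e2} where
  fst := fun e => if e.1 = e1 then G.other s e1 else G.fst e.1
  snd := fun e => if e.1 = e1 then G.other s e2 else G.snd e.1

/-- The pair `e1, e2` at `s` is `τ`-admissible. -/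
def Admissible (G : Multigraph V E) (s : V) (τ : V → V → ℕ) (e1 e2 : E) : Prop :=
  ∀ x y : V, x ≠ s → y ≠ s → (G.lift s e1 e2).ConnAtLeast x y (τ x y)

/-- The lifting graph `L(G,s,τ)` on the edges incident with `s`. -/
def LiftingGraph (G : Multigraph V E) (s : V) (τ : V → V → ℕ) :
    SimpleGraph {e : E // G.Inc e s} where
  Adj e f := e ≠ f ∧ (G.Admissible s τ e.1 f.1 ∨ G.Admissible s τ f.1 e.1)
  symm := ⟨fun _ _ h => ⟨h.1.symm, h.2.symm⟩⟩
  loopless := ⟨fun _ h => h.1 rfl⟩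

/-- The target function `τ_A`. -/
def tauA (A : Set V) (ℓ : ℕ) : V → V → ℕ := fun x y => if x ∈ A ∧ y ∈ A then ℓ else 0

/-- `r_τ(D)`. -/
noncomputable def rTau (s : V) (τ : V → V → ℕ) (D : Set V) : ℕ :=
  sSup {m | ∃ a ∈ D, ∃ b, b ∉ D ∧ b ≠ s ∧ τ a b = m}

/-- A dangerous set with respect to `A` and `ℓ`. -/
def DangerousA (G : Multigraph V E) (A : Set V) (ℓ : ℕ) (D : Set V) : Prop :=
  (D ∩ A).Nonempty ∧ (A \ D).Nonempty ∧ (G.cut D).ncard ≤ ℓ + 1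

/-- Independent set in a simple graph. -/
def IndepIn {α : Type} (L : SimpleGraph α) (s : Set α) : Prop :=
  s.Pairwise fun a b => ¬ L.Adj a b

/-- A one-way infinite path (ray). -/
def IsRay (G : Multigraph V E) (r : ℕ → E × Bool) : Prop :=
  (∀ n, G.dst (r n) = G.src (r (n + 1))) ∧ Function.Injective (fun n => G.src (r n))

def rayVerts (G : Multigraph V E) (r : ℕ → E × Bool) : Set V := {v | ∃ n, G.src (r n) = v}

def rayEdges (r : ℕ → E × Bool) : Set E := {e | ∃ n, (r n).1 = e}

def walkVerts (G : Multigraph V E) (l : List (E × Bool)) : Set V :=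
  {v | ∃ s ∈ l, G.src s = v ∨ G.dst s = v}

/-- Two rays are equivalent if there are infinitely many pairwise vertex-disjoint
paths between them. -/
def RayEquiv (G : Multigraph V E) (r1 r2 : ℕ → E × Bool) : Prop :=
  ∃ (P : ℕ → List (E × Bool)) (a b : ℕ → V),
    (∀ n, a n ∈ G.rayVerts r1 ∧ b n ∈ G.rayVerts r2 ∧ G.IsWalk (a n) (b n) (P n)) ∧
    ∀ m n, m ≠ n →
      Disjoint ({a m, b m} ∪ G.walkVerts (P m)) ({a n, b n} ∪ G.walkVerts (P n))

/-- `B` is boundary-linked: there are pairwise edge-disjoint equivalent rays in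
`G[B]` plus its boundary such that every boundary edge is the first edge of one of them. -/
def BoundaryLinked (G : Multigraph V E) (B : Set V) : Prop :=
  ∃ ρ : G.cut B → (ℕ → E × Bool),
    (∀ e, G.IsRay (ρ e) ∧ (ρ e 0).1 = e.1 ∧
      ∀ n, ((ρ e n).1 ∈ G.cut B ∨ (G.fst (ρ e n).1 ∈ B ∧ G.snd (ρ e n).1 ∈ B))) ∧
    (∀ e f : G.cut B, G.RayEquiv (ρ e) (ρ f)) ∧
    (∀ e f : G.cut B, e ≠ f → Disjoint (rayEdges (ρ e)) (rayEdges (ρ f)))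

def LocallyFinite (G : Multigraph V E) : Prop := ∀ v, {e | G.Inc e v}.Finite

/-- Reachability by a walk avoiding the edge set `F`. -/
def ReachAvoidE (G : Multigraph V E) (F : Set E) (x y : V) : Prop :=
  ∃ l, G.IsWalk x y l ∧ ∀ s ∈ l, s.1 ∉ F

/-- The edge set `F` separates `A'` from the end of the ray `r`. -/
def SeparatesEnd (G : Multigraph V E) (F : Set E) (A' : Set V) (r : ℕ → E × Bool) : Prop :=
  ∃ N, ∀ n, N ≤ n → ∀ a ∈ A', ¬ G.ReachAvoidE F a (G.src (r n))

/-- Reachability by a walk avoiding the vertex set `A`. -/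
def ReachAvoidV (G : Multigraph V E) (A : Set V) (x y : V) : Prop :=
  x ∉ A ∧ y ∉ A ∧ ∃ l, G.IsWalk x y l ∧ Disjoint (G.walkVerts l) A

/-- `B` is a connected component of `G - A`. -/
def IsComponentOutside (G : Multigraph V E) (A B : Set V) : Prop :=
  ∃ v, v ∉ A ∧ B = {w | G.ReachAvoidV A v w}

/-- A bond: a minimal edge cut. -/
def IsBond (G : Multigraph V E) (F : Set E) : Prop :=
  (∃ Y : Set V, Y.Nonempty ∧ Yᶜ.Nonempty ∧ F = G.cut Y) ∧
  ∀ F' : Set E, F' ⊂ F → ¬ ∃ Y : Set V, Y.Nonempty ∧ Yᶜ.Nonempty ∧ F' = G.cut Y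

/-- A spanning tree given by an edge set `T`: the subgraph `(V, T)` is connected
and contains no closed trail. -/
def IsSpanningTree (G : Multigraph V E) (T : Set E) : Prop :=
  (∀ x y : V, ∃ l, G.IsWalk x y l ∧ ∀ s ∈ l, s.1 ∈ T) ∧
  ∀ (v : V) (l : List (E × Bool)), l ≠ [] → G.IsTrail v v l → (∀ s ∈ l, s.1 ∈ T) → False

end Multigraph

end
end NW

open NW NW.Multigraph


/-!
By Menger's theorem for arcs (proved below by augmenting flows along residual trails) it suffices
to orient `G` so that at least `k` arcs leave every nonempty proper vertex set. Following Lovász,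
this is proved for graphs whose non-loop edges lie inside a vertex set `A`, by induction on `|A|`
and on the number of edges. If some edge can be deleted without destroying `2k`-edge-connectivity
on `A`, delete it. Otherwise every edge lies in a tight set (`d(X) = 2k`), and uncrossing shows
that a minimal tight set is a single vertex `s` with `d(s) = 2k`. Lovász's splitting lemma splits
off the edges at `s` in `k` pairs keeping `A.erase s` `2k`-edge-connected; an orientation of the
result given by induction lifts back by replacing each new arc `a → b` with `a → s → b`, so that
`k` arcs leave and `k` arcs enter `s`.
-/

namespace NW.Multigraph

open Finset Classical

noncomputable section

variable {V E : Type} (G : Multigraph V E)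

section Counting

variable {α : Type*} [Fintype α]

theorem card_filter_eq_add_ite (p : α → Prop) [DecidablePred p] (g : α) :
    #{h | p h} = #{h | p h ∧ h ≠ g} + if p g then 1 else 0 := by
  simp only [card_filter]
  rw [← sum_erase_add _ _ (mem_univ g), ← sum_erase_add _ _ (mem_univ g)]
  simp only [ne_eq, not_true_eq_false, and_false, if_false, add_zero]
  congr 1
  exact sum_congr rfl fun h hh => by simp [(mem_erase.1 hh).1]

theorem card_filter_add_eq_of_agree_off {p q : α → Prop} [DecidablePred p]
    [DecidablePred q] {g : α} (hpq : ∀ h, h ≠ g → (p h ↔ q h)) :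
    #{h | p h} + (if q g then 1 else 0) = #{h | q h} + if p g then 1 else 0 := by
  have hoff : #{h | p h ∧ h ≠ g} = #{h | q h ∧ h ≠ g} :=
    congrArg card (filter_congr fun h _ => by
      constructor <;> rintro ⟨hh, hhg⟩ <;> simp_all [hpq h hhg])
  rw [card_filter_eq_add_ite p g, card_filter_eq_add_ite q g, hoff]
  ring

theorem card_filter_add_eq_of_agree_off_pair {p q : α → Prop} [DecidablePred p]
    [DecidablePred q] {e f : α} (hef : e ≠ f) (hpq : ∀ g, g ≠ e → g ≠ f → (p g ↔ q g)) :
    #{g | p g} + ((if q e then 1 else 0) + if q f then 1 else 0) =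
      #{g | q g} + ((if p e then 1 else 0) + if p f then 1 else 0) := by
  have hoff : #{g | (p g ∧ g ≠ e) ∧ g ≠ f} = #{g | (q g ∧ g ≠ e) ∧ g ≠ f} :=
    congrArg card (filter_congr fun g _ => by
      constructor <;> rintro ⟨⟨h, hge⟩, hgf⟩ <;> simp_all [hpq g hge hgf])
  rw [card_filter_eq_add_ite p e, card_filter_eq_add_ite (fun g => p g ∧ g ≠ e) f,
    card_filter_eq_add_ite q e, card_filter_eq_add_ite (fun g => q g ∧ g ≠ e) f, hoff]
  simp only [ne_eq, hef.symm, not_false_eq_true, and_true]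
  ring

end Counting

section Cuts

variable [Fintype E]

def IsLoop (e : E) : Prop := G.fst e = G.snd e

def Crosses (X : Finset V) (e : E) : Prop :=
  (G.fst e ∈ X ∧ G.snd e ∉ X) ∨ (G.snd e ∈ X ∧ G.fst e ∉ X)

def Joins (X Y : Finset V) (e : E) : Prop :=
  (G.fst e ∈ X ∧ G.snd e ∈ Y) ∨ (G.snd e ∈ X ∧ G.fst e ∈ Y)

def cutSize (X : Finset V) : ℕ := #{e | G.Crosses X e}

def numJoining (X Y : Finset V) : ℕ := #{e | G.Joins X Y e}

theorem cutSize_add_cutSize_eq_inter_union (X Y : Finset V) :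
    G.cutSize X + G.cutSize Y =
      G.cutSize (X ∩ Y) + G.cutSize (X ∪ Y) + 2 * G.numJoining (X \ Y) (Y \ X) := by
  simp only [cutSize, numJoining, card_filter, mul_sum, ← sum_add_distrib]
  refine sum_congr rfl fun e _ => ?_
  by_cases G.fst e ∈ X <;> by_cases G.fst e ∈ Y <;> by_cases G.snd e ∈ X <;>
    by_cases G.snd e ∈ Y <;> simp [Crosses, Joins, *]

theorem cutSize_add_cutSize_eq_sdiff [Fintype V] (X Y : Finset V) :
    G.cutSize X + G.cutSize Y =
      G.cutSize (X \ Y) + G.cutSize (Y \ X) + 2 * G.numJoining (X ∩ Y) (X ∪ Y)ᶜ := by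
  simp only [cutSize, numJoining, card_filter, mul_sum, ← sum_add_distrib]
  refine sum_congr rfl fun e _ => ?_
  by_cases G.fst e ∈ X <;> by_cases G.fst e ∈ Y <;> by_cases G.snd e ∈ X <;>
    by_cases G.snd e ∈ Y <;> simp [Crosses, Joins, *]

theorem cutSize_insert_add {s : V} {X : Finset V} (hs : s ∉ X) :
    G.cutSize (insert s X) + 2 * G.numJoining {s} X = G.cutSize X + G.cutSize {s} := by
  simp only [cutSize, numJoining, card_filter, mul_sum, ← sum_add_distrib]
  refine sum_congr rfl fun e _ => ?_
  by_cases h1 : G.fst e = s <;> by_cases h2 : G.snd e = s <;> by_cases G.fst e ∈ X <;>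
    by_cases G.snd e ∈ X <;> simp_all [Crosses, Joins]

theorem numJoining_union_add_inter {s : V} {X Y : Finset V} (hX : s ∉ X) (hY : s ∉ Y) :
    G.numJoining {s} (X ∪ Y) + G.numJoining {s} (X ∩ Y) =
      G.numJoining {s} X + G.numJoining {s} Y := by
  simp only [numJoining, card_filter, ← sum_add_distrib]
  refine sum_congr rfl fun e _ => ?_
  by_cases h1 : G.fst e = s <;> by_cases h2 : G.snd e = s <;> by_cases G.fst e ∈ X <;>
    by_cases G.snd e ∈ X <;> by_cases G.fst e ∈ Y <;> by_cases G.snd e ∈ Y <;>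
    simp_all [Joins]

theorem sum_cutSize_singleton (X : Finset V) :
    ∑ v ∈ X, G.cutSize {v} =
      G.cutSize X + 2 * #{e | ¬ G.IsLoop e ∧ G.fst e ∈ X ∧ G.snd e ∈ X} := by
  simp only [cutSize, card_filter, mul_sum, ← sum_add_distrib]
  rw [sum_comm]
  refine sum_congr rfl fun e _ => ?_
  by_cases hl : G.IsLoop e
  · simp_all [Crosses, IsLoop]
  · have hne : G.fst e ≠ G.snd e := hl
    have hsplit : ∀ v, (if G.Crosses {v} e then 1 else 0) =
        (if G.fst e = v then 1 else 0) + (if G.snd e = v then 1 else 0) := by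
      intro v
      by_cases h1 : G.fst e = v <;> by_cases h2 : G.snd e = v <;> simp_all [Crosses]
    simp only [hsplit, sum_add_distrib, sum_ite_eq]
    by_cases G.fst e ∈ X <;> by_cases G.snd e ∈ X <;> simp_all [Crosses, IsLoop]

def SupportedOn (A : Finset V) : Prop := ∀ e, G.IsLoop e ∨ (G.fst e ∈ A ∧ G.snd e ∈ A)

theorem cutSize_sdiff {A : Finset V} (hA : G.SupportedOn A) (Y : Finset V) :
    G.cutSize (A \ Y) = G.cutSize Y := by
  unfold cutSize
  congr 1
  refine filter_congr fun e _ => ?_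
  rcases hA e with hl | ⟨h1, h2⟩
  · simp [Crosses, show G.fst e = G.snd e from hl]
  · simp only [Crosses, mem_sdiff, h1, h2, true_and, not_not]
    tauto

def IsSide (A X : Finset V) : Prop := X ⊆ A ∧ X.Nonempty ∧ (A \ X).Nonempty

theorem IsSide.sdiff {A X : Finset V} (h : IsSide A X) : IsSide A (A \ X) :=
  ⟨sdiff_subset, h.2.2, by rw [Finset.sdiff_sdiff_eq_self h.1]; exact h.2.1⟩

theorem IsSide.mono {A X Y : Finset V} (hX : IsSide A X) (hYX : Y ⊆ X) (hY : Y.Nonempty) :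
    IsSide A Y :=
  ⟨hYX.trans hX.1, hY, hX.2.2.mono (sdiff_subset_sdiff subset_rfl hYX)⟩

theorem IsSide.of_erase {A X : Finset V} {s : V} (hX : IsSide (A.erase s) X) : IsSide A X :=
  ⟨hX.1.trans (erase_subset s A), hX.2.1,
    hX.2.2.mono (sdiff_subset_sdiff (erase_subset s A) le_rfl)⟩

theorem IsSide.one_lt_card {A X : Finset V} (hX : IsSide A X) : 1 < #A := by
  obtain ⟨x, hx⟩ := hX.2.1
  obtain ⟨y, hy⟩ := hX.2.2
  exact Finset.one_lt_card.2
    ⟨x, hX.1 hx, y, (mem_sdiff.1 hy).1, fun h => (mem_sdiff.1 hy).2 (h ▸ hx)⟩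

theorem isSide_singleton {A : Finset V} {a : V} (ha : a ∈ A) (hA : 1 < #A) : IsSide A {a} := by
  obtain ⟨b, hb, hba⟩ := exists_mem_ne hA a
  exact ⟨singleton_subset_iff.2 ha, singleton_nonempty a, b, by simp [hb, hba]⟩

def EdgeConnectedOn (A : Finset V) (k : ℕ) : Prop := ∀ X, IsSide A X → k ≤ G.cutSize X

theorem cutSize_eq_ncard_cut (X : Finset V) : G.cutSize X = (G.cut X).ncard := by
  have h : G.cut X = ↑(univ.filter (G.Crosses X)) := by
    ext e
    simp only [cut, Crosses, mem_coe, Set.mem_ofPred_eq, mem_filter, mem_univ, true_and]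
    tauto
  rw [h, Set.ncard_coe_finset]
  rfl

theorem EdgeConnected.edgeConnectedOn_univ [Fintype V] {k : ℕ} (h : G.EdgeConnected k) :
    G.EdgeConnectedOn univ k := fun X hX => by
  obtain ⟨y, hy⟩ := hX.2.2
  rw [cutSize_eq_ncard_cut]
  exact h X (by simpa using hX.2.1) ⟨y, by simpa using hy⟩

variable (o : E → Bool)

def outDeg (X : Finset V) : ℕ := #{e | G.tailO o e ∈ X ∧ G.headO o e ∉ X}

end Cuts

section Menger

variable (o : E → Bool)

def DiWalkIn (S : Finset E) : V → List E → V → Prop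
  | x, [], y => x = y
  | x, e :: l, y => e ∈ S ∧ G.tailO o e = x ∧ DiWalkIn S (G.headO o e) l y

variable {G o} {S : Finset E}

@[simp] theorem diWalkIn_nil {x y : V} : G.DiWalkIn o S x [] y ↔ x = y := Iff.rfl

@[simp] theorem diWalkIn_cons {x y : V} {e : E} {l : List E} :
    G.DiWalkIn o S x (e :: l) y ↔ e ∈ S ∧ G.tailO o e = x ∧ G.DiWalkIn o S (G.headO o e) l y :=
  Iff.rfl

theorem diWalkIn_append {l₁ l₂ : List E} {x y : V} :
    G.DiWalkIn o S x (l₁ ++ l₂) y ↔ ∃ z, G.DiWalkIn o S x l₁ z ∧ G.DiWalkIn o S z l₂ y := by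
  induction l₁ generalizing x with
  | nil => simp
  | cons e l ih => simp [ih, and_assoc]

theorem DiWalkIn.snoc {l : List E} {x : V} {e : E} (h : G.DiWalkIn o S x l (G.tailO o e))
    (he : e ∈ S) : G.DiWalkIn o S x (l ++ [e]) (G.headO o e) :=
  diWalkIn_append.2 ⟨_, h, by simp [he]⟩

theorem DiWalkIn.subset {l : List E} {x y : V} (h : G.DiWalkIn o S x l y) : ∀ e ∈ l, e ∈ S := by
  induction l generalizing x with
  | nil => simp
  | cons e l ih =>
    rw [diWalkIn_cons] at h
    simpa [h.1] using ih h.2.2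

theorem DiWalkIn.mono {S' : Finset E} (hS : S ⊆ S') {l : List E} {x y : V}
    (h : G.DiWalkIn o S x l y) : G.DiWalkIn o S' x l y := by
  induction l generalizing x with
  | nil => exact h
  | cons e l ih => exact ⟨hS h.1, h.2.1, ih h.2.2⟩

/-- A repeated arc has the same tail at both occurrences, so the closed piece in between can be
cut out. -/
theorem DiWalkIn.exists_nodup {l : List E} {x y : V} (h : G.DiWalkIn o S x l y) :
    ∃ l', G.DiWalkIn o S x l' y ∧ l'.Nodup ∧ l' ⊆ l := by
  induction hn : l.length using Nat.strong_induction_on generalizing l x with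
  | _ n ih =>
  match l, h with
  | [], h => exact ⟨[], h, List.nodup_nil, List.Subset.refl _⟩
  | e :: l, h =>
    obtain ⟨heS, hx, hl⟩ := diWalkIn_cons.1 h
    by_cases he : e ∈ l
    · obtain ⟨l₁, l₂, rfl⟩ := List.append_of_mem he
      obtain ⟨z, -, hz⟩ := diWalkIn_append.1 hl
      obtain ⟨-, hzx, -⟩ := diWalkIn_cons.1 hz
      rw [← hzx, hx] at hz
      obtain ⟨l', hl', hnd, hsub⟩ := ih (e :: l₂).length (by simp [← hn]) hz rfl
      exact ⟨l', hl', hnd, List.Subset.trans hsub (by simp [List.subset_def]; tauto)⟩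
    · obtain ⟨l', hl', hnd, hsub⟩ := ih _ (by simp [← hn]) hl rfl
      exact ⟨e :: l', ⟨heS, hx, hl'⟩, List.nodup_cons.2 ⟨fun h' => he (hsub h'), hnd⟩,
        List.cons_subset_cons _ hsub⟩

theorem DiWalkIn.isDiWalk {l : List E} {x y : V} (h : G.DiWalkIn o S x l y) :
    G.IsDiWalk o x y l := by
  induction l generalizing x with
  | nil => exact ⟨List.isChain_nil, Or.inl ⟨rfl, h⟩⟩
  | cons e l ih =>
    obtain ⟨-, hx, hl⟩ := diWalkIn_cons.1 h
    obtain ⟨hchain, hends⟩ := ih hl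
    refine ⟨List.isChain_cons.2 ⟨fun f hf => ?_, hchain⟩, Or.inr ?_⟩
    · rcases hends with ⟨rfl, -⟩ | ⟨a, b, ha, -, hsa, -⟩
      · simp at hf
      · rw [ha, Option.mem_def, Option.some_inj] at hf
        exact hf ▸ hsa.symm
    · rcases hends with ⟨rfl, hxy⟩ | ⟨a, b, ha, hb, -, hdb⟩
      · exact ⟨e, e, rfl, rfl, hx, hxy⟩
      · cases l with
        | nil => simp at ha
        | cons a' l => exact ⟨e, b, rfl, by rwa [List.getLast?_cons_cons], hx, hdb⟩

variable (G o) in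
theorem exists_trail_or_closed [Fintype V] (S : Finset E) (x w : V) :
    (∃ l, G.DiWalkIn o S x l w ∧ l.Nodup) ∨
      ∃ R : Finset V, x ∈ R ∧ w ∉ R ∧ ∀ e ∈ S, G.tailO o e ∈ R → G.headO o e ∈ R := by
  by_cases h : ∃ l, G.DiWalkIn o S x l w
  · obtain ⟨l, hl⟩ := h
    obtain ⟨l', hl', hnd, -⟩ := hl.exists_nodup
    exact Or.inl ⟨l', hl', hnd⟩
  · refine Or.inr ⟨({y | ∃ l, G.DiWalkIn o S x l y} : Finset V), by simpa using ⟨[], rfl⟩,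
      by simpa using h, fun e he ht => ?_⟩
    obtain ⟨l, hl⟩ := (mem_filter.1 ht).2
    exact mem_filter.2 ⟨mem_univ _, _, hl.snoc he⟩

variable (G o) in
def netOut (F : Finset E) (y : V) : ℤ :=
  ∑ e ∈ F, ((if G.tailO o e = y then 1 else 0) - (if G.headO o e = y then 1 else 0))

theorem DiWalkIn.netOut_toFinset {l : List E} {x w : V} (h : G.DiWalkIn o S x l w)
    (hnd : l.Nodup) {y : V} (hy : y ≠ w) : G.netOut o l.toFinset y = if y = x then 1 else 0 := by
  induction l generalizing x with
  | nil => simp [netOut, show y ≠ x from h ▸ hy]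
  | cons e l ih =>
    obtain ⟨-, rfl, hl⟩ := diWalkIn_cons.1 h
    have hel : e ∉ l.toFinset := by simpa using (List.nodup_cons.1 hnd).1
    have hrest := ih hl (List.nodup_cons.1 hnd).2
    unfold netOut at hrest ⊢
    rw [List.toFinset_cons, sum_insert hel, hrest]
    by_cases h1 : y = G.tailO o e <;> by_cases h2 : y = G.headO o e <;> simp [h1, h2, eq_comm]

theorem sum_netOut_eq_card_sub_card (F : Finset E) (R : Finset V) :
    ∑ y ∈ R, G.netOut o F y =
      (#{e ∈ F | G.tailO o e ∈ R ∧ G.headO o e ∉ R} : ℤ) -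
        #{e ∈ F | G.headO o e ∈ R ∧ G.tailO o e ∉ R} := by
  simp only [netOut, card_filter, Nat.cast_sum, ← sum_sub_distrib]
  rw [sum_comm]
  refine sum_congr rfl fun e _ => ?_
  rw [sum_sub_distrib, sum_ite_eq, sum_ite_eq]
  by_cases G.tailO o e ∈ R <;> by_cases G.headO o e ∈ R <;> simp [*]

variable (o) in
def residual (F : Finset E) (e : E) : Bool := if e ∈ F then !o e else o e

theorem netOut_symmDiff [Fintype E] (F L : Finset E) (y : V) :
    G.netOut o (symmDiff F L) y = G.netOut o F y + G.netOut (residual o F) L y := by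
  simp only [netOut, ← Fintype.sum_extend_by_zero (s := symmDiff F L),
    ← Fintype.sum_extend_by_zero (s := F), ← Fintype.sum_extend_by_zero (s := L),
    ← sum_add_distrib]
  refine sum_congr rfl fun e _ => ?_
  by_cases hF : e ∈ F <;> by_cases hL : e ∈ L <;> cases ho : o e <;>
    simp [hF, hL, ho, residual, mem_symmDiff, tailO, headO]

theorem netOut_sdiff {F L : Finset E} (h : L ⊆ F) (y : V) :
    G.netOut o (F \ L) y = G.netOut o F y - G.netOut o L y := by
  unfold netOut
  rw [sum_sdiff_eq_sub h]

@[simp] theorem tailO_residual (F : Finset E) (e : E) :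
    G.tailO (residual o F) e = if e ∈ F then G.headO o e else G.tailO o e := by
  unfold tailO headO residual; split_ifs <;> simp_all

@[simp] theorem headO_residual (F : Finset E) (e : E) :
    G.headO (residual o F) e = if e ∈ F then G.tailO o e else G.headO o e := by
  unfold tailO headO residual; split_ifs <;> simp_all

variable (G o) in
def IsFlow (F : Finset E) (v w : V) (j : ℕ) : Prop :=
  ∀ y, y ≠ w → G.netOut o F y = if y = v then (j : ℤ) else 0

variable {F : Finset E} {v w : V} {j : ℕ}

theorem IsFlow.sum_netOut (hF : G.IsFlow o F v w j) {R : Finset V} (hv : v ∈ R) (hw : w ∉ R) :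
    ∑ y ∈ R, G.netOut o F y = j := by
  rw [sum_congr rfl fun y hy => hF y (ne_of_mem_of_not_mem hy hw), sum_ite_eq', if_pos hv]

theorem IsFlow.augment [Fintype E] (hF : G.IsFlow o F v w j) {L : List E}
    (hL : G.DiWalkIn (residual o F) univ v L w) (hnd : L.Nodup) :
    G.IsFlow o (symmDiff F L.toFinset) v w (j + 1) := by
  intro y hy
  rw [netOut_symmDiff, hF y hy, hL.netOut_toFinset hnd hy]
  split_ifs <;> push_cast; ring

theorem IsFlow.sdiff (hF : G.IsFlow o F v w (j + 1)) {L : List E} (hL : G.DiWalkIn o F v L w)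
    (hnd : L.Nodup) : G.IsFlow o (F \ L.toFinset) v w j := by
  intro y hy
  rw [netOut_sdiff (fun e he => hL.subset e (List.mem_toFinset.1 he)), hF y hy,
    hL.netOut_toFinset hnd hy]
  split_ifs <;> push_cast; ring

theorem exists_isFlow [Fintype V] [Fintype E] {k : ℕ}
    (hcut : ∀ X, v ∈ X → w ∉ X → k ≤ G.outDeg o X) (hj : j ≤ k) : ∃ F, G.IsFlow o F v w j := by
  induction j with
  | zero => exact ⟨∅, fun y _ => by simp [netOut]⟩
  | succ j ih =>
    obtain ⟨F, hF⟩ := ih (by omega)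
    rcases G.exists_trail_or_closed (residual o F) univ v w with ⟨L, hL, hnd⟩ | ⟨R, hv, hw, hR⟩
    · exact ⟨_, hF.augment hL hnd⟩
    -- No residual arc leaves `R`: the arcs leaving `R` all carry flow and no flow enters `R`,
    -- so the value `j` of the flow is at least `outDeg R ≥ k`.
    · have hR' : ∀ e, G.tailO o e ∈ R → G.headO o e ∉ R → e ∈ F := fun e ht hh => by
        by_contra heF
        exact hh (by simpa [heF] using hR e (mem_univ e) (by simpa [heF] using ht))
      have hout : #{e ∈ F | G.tailO o e ∈ R ∧ G.headO o e ∉ R} = G.outDeg o R := by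
        unfold outDeg
        congr 1
        ext e
        simp only [mem_filter, mem_univ, true_and, and_iff_right_iff_imp]
        exact fun h => hR' e h.1 h.2
      have hin : #{e ∈ F | G.headO o e ∈ R ∧ G.tailO o e ∉ R} = 0 := by
        refine card_eq_zero.2 (filter_eq_empty_iff.2 fun e heF h => h.2 ?_)
        simpa [heF] using hR e (mem_univ e) (by simpa [heF] using h.1)
      have hsum := hF.sum_netOut hv hw
      rw [sum_netOut_eq_card_sub_card, hout, hin] at hsum
      have := hcut R hv hw
      omega

theorem IsFlow.exists_trails [Fintype V] (hF : G.IsFlow o F v w j) :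
    ∃ g : Fin j → List E, (∀ i, G.DiWalkIn o F v (g i) w ∧ (g i).Nodup) ∧
      ∀ i i', i ≠ i' → (g i).Disjoint (g i') := by
  induction j generalizing F with
  | zero => exact ⟨Fin.elim0, fun i => i.elim0, fun i => i.elim0⟩
  | succ j ih =>
    rcases G.exists_trail_or_closed o F v w with ⟨L, hL, hnd⟩ | ⟨R, hv, hw, hR⟩
    · obtain ⟨g, hg, hdisj⟩ := ih (hF.sdiff hL hnd)
      have hgL : ∀ i, (g i).Disjoint L := fun i e hge hLe =>
        (mem_sdiff.1 ((hg i).1.subset e hge)).2 (List.mem_toFinset.2 hLe)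
      refine ⟨Fin.cons L g, Fin.cases ⟨hL, hnd⟩ fun i => ⟨(hg i).1.mono sdiff_subset, (hg i).2⟩,
        fun i i' hii' => ?_⟩
      cases i using Fin.cases <;> cases i' using Fin.cases
      · exact absurd rfl hii'
      · exact (hgL _).symm
      · exact hgL _
      · exact hdisj _ _ fun h => hii' (congrArg _ h)
    -- No arc of `F` leaves `R`, so the net outflow `j + 1` of `R` cannot be positive.
    · have hout : #{e ∈ F | G.tailO o e ∈ R ∧ G.headO o e ∉ R} = 0 :=
        card_eq_zero.2 (filter_eq_empty_iff.2 fun e heF h => h.2 (hR e heF h.1))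
      have hsum := hF.sum_netOut hv hw
      rw [sum_netOut_eq_card_sub_card, hout] at hsum
      omega

theorem diConnAtLeast_of_le_outDeg [Fintype V] [Fintype E] {k : ℕ}
    (hcut : ∀ X, v ∈ X → w ∉ X → k ≤ G.outDeg o X) : G.DiConnAtLeast o v w k := by
  obtain ⟨F, hF⟩ := exists_isFlow hcut le_rfl
  obtain ⟨g, hg, hdisj⟩ := hF.exists_trails
  exact ⟨g, fun i => ⟨(hg i).1.isDiWalk, (hg i).2⟩, hdisj⟩

end Menger

section Edges

variable {G} {s : V} {e : E}

theorem Crosses.other_ne (he : G.Crosses {s} e) : G.other s e ≠ s := by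
  unfold Crosses at he; unfold other; split_ifs <;> simp_all

theorem Crosses.other_mem {A : Finset V} (he : G.Crosses {s} e) (hA : G.SupportedOn A) :
    G.other s e ∈ A := by
  rcases hA e with hl | ⟨h1, h2⟩
  · unfold Crosses IsLoop at *; simp_all
  · unfold other; split_ifs <;> assumption

theorem inc_other (s : V) (e : E) : G.Inc e (G.other s e) := by
  unfold Inc other; split_ifs <;> simp

theorem Crosses.other_other (he : G.Crosses {s} e) : G.other (G.other s e) e = s := by
  unfold Crosses at he; unfold other; split_ifs <;> simp_all

theorem Crosses.not_isLoop {X : Finset V} (he : G.Crosses X e) : ¬ G.IsLoop e := by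
  unfold Crosses IsLoop at *; aesop

theorem Crosses.inc (he : G.Crosses {s} e) : G.Inc e s := by
  unfold Crosses at he; unfold Inc; aesop

theorem Crosses.crosses_iff (he : G.Crosses {s} e) (X : Finset V) :
    G.Crosses X e ↔ (s ∈ X ↔ G.other s e ∉ X) := by
  unfold Crosses at he ⊢; unfold other; split_ifs <;> simp_all <;> tauto

theorem joins_singleton_iff {X : Finset V} (hs : s ∉ X) :
    G.Joins {s} X e ↔ G.Crosses {s} e ∧ G.other s e ∈ X := by
  unfold Joins Crosses other
  by_cases h1 : G.fst e = s <;> by_cases h2 : G.snd e = s <;> simp_all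

theorem Crosses.joins {P Q : Finset V} (he : G.Crosses {s} e) (hP : G.other s e ∈ P)
    (hQ : s ∈ Q) : G.Joins P Q e := by
  unfold Crosses at he; unfold Joins; unfold other at hP
  split_ifs at hP <;> simp_all

theorem SupportedOn.tailO_headO_mem {B : Finset V} (hB : G.SupportedOn B) {o : E → Bool} {g : E}
    (hg : G.tailO o g ≠ G.headO o g) : G.tailO o g ∈ B ∧ G.headO o g ∈ B := by
  unfold tailO headO at *
  rcases hB g with hl | ⟨h₁, h₂⟩
  · unfold IsLoop at hl; cases o g <;> simp_all
  · cases o g <;> simp [h₁, h₂]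

variable [Fintype E]

theorem cutSize_singleton_le_numJoining {Y : Finset V} (hs : s ∉ Y)
    (hY : ∀ g, G.Crosses {s} g → G.other s g ∈ Y) : G.cutSize {s} ≤ G.numJoining {s} Y :=
  card_le_card (monotone_filter_right _ fun g _ hg => (joins_singleton_iff hs).2 ⟨hg, hY g hg⟩)

theorem one_le_numJoining {X : Finset V} (he : G.Crosses {s} e) (hs : s ∉ X)
    (hX : G.other s e ∈ X) : 1 ≤ G.numJoining {s} X :=
  card_pos.2 ⟨e, mem_filter.2 ⟨mem_univ _, (joins_singleton_iff hs).2 ⟨he, hX⟩⟩⟩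

end Edges

section Splitting

/-- Splitting off the pair `e, f` at `s`: `e` is rerouted to join the far ends of `e` and `f`,
and `f` becomes a loop at `s`, so that the edge type does not change. -/
def splitOff (s : V) (e f : E) : Multigraph V E where
  fst g := if g = e then G.other s e else if g = f then s else G.fst g
  snd g := if g = e then G.other s f else if g = f then s else G.snd g

def orientFrom (g : E) (x : V) : Bool := decide (G.fst g = x)

/-- The arc `a → b` of the split-off graph becomes the path `a → s → b`. -/
def liftOrientation (s : V) (e f : E) (o : E → Bool) (g : E) : Bool :=
  if g = e then G.orientFrom e (if o e then G.other s e else s)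
  else if g = f then G.orientFrom f (if o e then s else G.other s f)
  else o g

variable {G} {s : V} {e f : E}

theorem tailO_headO_of_eq_orientFrom {o : E → Bool} {g : E} {x : V} (ho : o g = G.orientFrom g x)
    (hx : G.Inc g x) : G.tailO o g = x ∧ G.headO o g = G.other x g := by
  unfold Inc at hx; unfold tailO headO other orientFrom at *
  by_cases h : G.fst g = x <;> simp_all

@[simp] theorem splitOff_fst_left : (G.splitOff s e f).fst e = G.other s e := by simp [splitOff]

@[simp] theorem splitOff_snd_left : (G.splitOff s e f).snd e = G.other s f := by simp [splitOff]

theorem splitOff_fst_right (hef : e ≠ f) : (G.splitOff s e f).fst f = s := by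
  simp [splitOff, hef.symm]

theorem splitOff_snd_right (hef : e ≠ f) : (G.splitOff s e f).snd f = s := by
  simp [splitOff, hef.symm]

theorem splitOff_of_ne {g : E} (hge : g ≠ e) (hgf : g ≠ f) :
    (G.splitOff s e f).fst g = G.fst g ∧ (G.splitOff s e f).snd g = G.snd g := by
  simp [splitOff, hge, hgf]

theorem liftOrientation_of_ne {o : E → Bool} {g : E} (hge : g ≠ e) (hgf : g ≠ f) :
    G.liftOrientation s e f o g = o g := by
  simp [liftOrientation, hge, hgf]

theorem tailO_headO_liftOrientation (hef : e ≠ f) (he : G.Crosses {s} e) (hf : G.Crosses {s} f)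
    (o : E → Bool) :
    G.tailO (G.liftOrientation s e f o) e = (if o e then G.other s e else s) ∧
      G.headO (G.liftOrientation s e f o) e = (if o e then s else G.other s e) ∧
      G.tailO (G.liftOrientation s e f o) f = (if o e then s else G.other s f) ∧
      G.headO (G.liftOrientation s e f o) f = (if o e then G.other s f else s) := by
  have hoe : G.liftOrientation s e f o e = _ := if_pos rfl
  have hof : G.liftOrientation s e f o f = _ := (if_neg hef.symm).trans (if_pos rfl)
  cases ho : o e <;> simp only [ho] at hoe hof ⊢
  · obtain ⟨h1, h2⟩ := tailO_headO_of_eq_orientFrom hoe he.inc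
    obtain ⟨h3, h4⟩ := tailO_headO_of_eq_orientFrom hof (inc_other s f)
    exact ⟨h1, h2, h3, h4.trans hf.other_other⟩
  · obtain ⟨h1, h2⟩ := tailO_headO_of_eq_orientFrom hoe (inc_other s e)
    obtain ⟨h3, h4⟩ := tailO_headO_of_eq_orientFrom hof hf.inc
    exact ⟨h1, h2.trans he.other_other, h3, h4⟩

theorem tailO_headO_splitOff (hef : e ≠ f) (o : E → Bool) :
    (G.splitOff s e f).tailO o e = (if o e then G.other s e else G.other s f) ∧
      (G.splitOff s e f).headO o e = (if o e then G.other s f else G.other s e) ∧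
      (G.splitOff s e f).tailO o f = s ∧ (G.splitOff s e f).headO o f = s := by
  simp [tailO, headO, splitOff_fst_right hef, splitOff_snd_right hef]

theorem SupportedOn.splitOff {A : Finset V} (hA : G.SupportedOn A) (hef : e ≠ f)
    (he : G.Crosses {s} e) (hf : G.Crosses {s} f) : (G.splitOff s e f).SupportedOn A := by
  intro g
  by_cases hge : g = e
  · exact Or.inr (by simp [hge, he.other_mem hA, hf.other_mem hA])
  by_cases hgf : g = f
  · exact Or.inl (by simp [IsLoop, hgf, splitOff_fst_right hef, splitOff_snd_right hef])
  · simpa [IsLoop, splitOff_of_ne hge hgf] using hA g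

variable [Fintype E]

/-- The correction term counts whether `X` separates `s` from both far ends. -/
theorem cutSize_splitOff_add (hef : e ≠ f) (he : G.Crosses {s} e) (hf : G.Crosses {s} f)
    (X : Finset V) :
    (G.splitOff s e f).cutSize X +
        (if (G.other s e ∈ X ↔ G.other s f ∈ X) ∧ (s ∈ X ↔ G.other s e ∉ X) then 2 else 0) =
      G.cutSize X := by
  have key := card_filter_add_eq_of_agree_off_pair (p := (G.splitOff s e f).Crosses X)
    (q := G.Crosses X) hef fun g hge hgf => by
      unfold Crosses; rw [(splitOff_of_ne hge hgf).1, (splitOff_of_ne hge hgf).2]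
  have hpe : (G.splitOff s e f).Crosses X e ↔ (G.other s e ∈ X ↔ G.other s f ∉ X) := by
    simp only [Crosses, splitOff_fst_left, splitOff_snd_left]; tauto
  have hpf : ¬ (G.splitOff s e f).Crosses X f := by
    simp [Crosses, splitOff_fst_right hef, splitOff_snd_right hef]
  simp only [hpe, hpf, he.crosses_iff, hf.crosses_iff, if_false] at key
  unfold cutSize
  by_cases G.other s e ∈ X <;> by_cases G.other s f ∈ X <;> by_cases s ∈ X <;> simp_all

theorem outDeg_splitOff_add_le (hef : e ≠ f) (he : G.Crosses {s} e) (hf : G.Crosses {s} f)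
    (o : E → Bool) (X : Finset V) :
    (G.splitOff s e f).outDeg o X +
        (if (G.other s e ∈ X ↔ G.other s f ∈ X) ∧ (s ∈ X ↔ G.other s e ∉ X) then 1 else 0) ≤
      G.outDeg (G.liftOrientation s e f o) X := by
  have key := card_filter_add_eq_of_agree_off_pair
    (p := fun g => (G.splitOff s e f).tailO o g ∈ X ∧ (G.splitOff s e f).headO o g ∉ X)
    (q := fun g => G.tailO (G.liftOrientation s e f o) g ∈ X ∧
      G.headO (G.liftOrientation s e f o) g ∉ X) hef fun g hge hgf => by
      unfold tailO headO
      rw [(splitOff_of_ne hge hgf).1, (splitOff_of_ne hge hgf).2, liftOrientation_of_ne hge hgf]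
  obtain ⟨h1, h2, h3, h4⟩ := tailO_headO_liftOrientation hef he hf o
  obtain ⟨h5, h6, h7, h8⟩ := tailO_headO_splitOff (s := s) (G := G) hef o
  simp only [h1, h2, h3, h4, h5, h6, h7, h8] at key
  unfold outDeg
  cases ho : o e <;> simp only [ho, Bool.false_eq_true, if_true, if_false] at key <;>
    by_cases G.other s e ∈ X <;> by_cases G.other s f ∈ X <;> by_cases s ∈ X <;> simp_all

end Splitting

section Deletion

/-- Deleting `g` is modelled by turning it into a loop, so that the edge type does not
change. -/
def deleteEdge (g : E) : Multigraph V E where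
  fst := G.fst
  snd h := if h = g then G.fst g else G.snd h

variable {G} {g : E}

theorem deleteEdge_of_ne {h : E} (hg : h ≠ g) :
    (G.deleteEdge g).fst h = G.fst h ∧ (G.deleteEdge g).snd h = G.snd h := by
  simp [deleteEdge, hg]

theorem isLoop_deleteEdge : (G.deleteEdge g).IsLoop g := by simp [IsLoop, deleteEdge]

theorem SupportedOn.deleteEdge {A : Finset V} (hA : G.SupportedOn A) (g : E) :
    (G.deleteEdge g).SupportedOn A := fun h => by
  by_cases hg : h = g
  · exact Or.inl (hg ▸ isLoop_deleteEdge)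
  · simpa [IsLoop, deleteEdge_of_ne hg] using hA h

variable [Fintype E]

theorem cutSize_deleteEdge_add (X : Finset V) :
    (G.deleteEdge g).cutSize X + (if G.Crosses X g then 1 else 0) = G.cutSize X := by
  have hg : ¬ (G.deleteEdge g).Crosses X g := by simp [Crosses, deleteEdge]
  have key := card_filter_add_eq_of_agree_off (p := (G.deleteEdge g).Crosses X)
    (q := G.Crosses X) fun h hh => by
      unfold Crosses; rw [(deleteEdge_of_ne hh).1, (deleteEdge_of_ne hh).2]
  rwa [if_neg hg, add_zero] at key

theorem exists_tight_crosses {A : Finset V} {k : ℕ} (hconn : G.EdgeConnectedOn A (2 * k))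
    (hdel : ¬ (G.deleteEdge g).EdgeConnectedOn A (2 * k)) :
    ∃ X, IsSide A X ∧ G.cutSize X = 2 * k ∧ G.Crosses X g := by
  by_contra! hnt
  refine hdel fun X hX => ?_
  have h := cutSize_deleteEdge_add (G := G) (g := g) X
  have := hconn X hX
  split_ifs at h with hc
  · have : G.cutSize X ≠ 2 * k := fun h' => hnt X hX h' hc
    omega
  · omega

theorem outDeg_deleteEdge_le (o : E → Bool) (X : Finset V) :
    (G.deleteEdge g).outDeg o X ≤ G.outDeg o X := by
  refine card_le_card (monotone_filter_right _ fun h _ hh => ?_)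
  by_cases hg : h = g
  · subst hg; unfold tailO headO at hh; cases o h <;> simp [deleteEdge] at hh
  · unfold tailO headO at hh ⊢; simpa [deleteEdge_of_ne hg] using hh

theorem card_nonloop_deleteEdge_lt (hg : ¬ G.IsLoop g) :
    #{h | ¬ (G.deleteEdge g).IsLoop h} < #{h | ¬ G.IsLoop h} := by
  refine card_lt_card (ssubset_iff_of_subset (monotone_filter_right _ fun h _ hh => ?_) |>.2
    ⟨g, by simpa using hg, by simpa using isLoop_deleteEdge⟩)
  by_cases hhg : h = g
  · exact absurd (hhg ▸ isLoop_deleteEdge) hh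
  · simpa [IsLoop, deleteEdge_of_ne hhg] using hh

end Deletion

section Lovasz

variable [Fintype E] {G} {A X Y : Finset V} {s : V} {k : ℕ} {e : E}

variable (G) in
/-- Splitting off `e` together with an edge whose far end lies in a dangerous set would destroy
the `2k`-edge-connectivity of `A.erase s`. -/
def IsDangerous (A : Finset V) (s : V) (k : ℕ) (e : E) (X : Finset V) : Prop :=
  IsSide (A.erase s) X ∧ G.cutSize X ≤ 2 * k + 1 ∧ G.other s e ∈ X

theorem IsDangerous.notMem (hX : G.IsDangerous A s k e X) : s ∉ X :=
  fun h => (mem_erase.1 (hX.1.1 h)).1 rfl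

/-- Since `A \ insert s X` is again a side, `d(insert s X) ≥ 2k`; the parity of `d(s)` then
removes the slack of one in `d(X) ≤ 2k + 1`. -/
theorem IsDangerous.two_mul_numJoining_le (hA : G.SupportedOn A)
    (hconn : G.EdgeConnectedOn (A.erase s) (2 * k)) (heven : Even (G.cutSize {s}))
    (hX : G.IsDangerous A s k e X) : 2 * G.numJoining {s} X ≤ G.cutSize {s} := by
  have hins := G.cutSize_insert_add hX.notMem
  have hcompl : A \ insert s X = A.erase s \ X := by rw [sdiff_insert, erase_sdiff_comm]
  have := hconn _ hX.1.sdiff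
  rw [← hcompl, G.cutSize_sdiff hA] at this
  obtain ⟨m, hm⟩ := heven
  have := hX.2.1
  omega

theorem exists_crosses_other_notMem_union (hA : G.SupportedOn A)
    (hconn : G.EdgeConnectedOn (A.erase s) (2 * k)) (heven : Even (G.cutSize {s}))
    (he : G.Crosses {s} e) (hX : G.IsDangerous A s k e X) (hY : G.IsDangerous A s k e Y) :
    ∃ g, G.Crosses {s} g ∧ G.other s g ∉ X ∪ Y := by
  by_contra! hcov
  have hsXY : s ∉ X ∪ Y := by simp [hX.notMem, hY.notMem]
  have h1 := cutSize_singleton_le_numJoining hsXY hcov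
  have h2 := G.numJoining_union_add_inter hX.notMem hY.notMem
  have h3 := one_le_numJoining he (by simp [hX.notMem]) (mem_inter.2 ⟨hX.2.2, hY.2.2⟩)
  have h4 := hX.two_mul_numJoining_le hA hconn heven
  have h5 := hY.two_mul_numJoining_le hA hconn heven
  omega

theorem inter_subset_of_maximal_isDangerous {X₁ X₂ X₃ : Finset V}
    (hconn : G.EdgeConnectedOn (A.erase s) (2 * k)) (hX₁ : Maximal (G.IsDangerous A s k e) X₁)
    (hX₂ : Maximal (G.IsDangerous A s k e) X₂) (hX₃ : Maximal (G.IsDangerous A s k e) X₃)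
    (h₁₂ : G.cutSize (X₁ ∩ X₂) ≤ 2 * k) (hroom : (A.erase s \ (X₃ ∪ X₁)).Nonempty) :
    X₁ ∩ X₂ ⊆ X₃ := by
  have ha : G.other s e ∈ X₃ ∩ (X₁ ∩ X₂) := by simp [hX₁.1.2.2, hX₂.1.2.2, hX₃.1.2.2]
  have hmeet := hconn _ (hX₃.1.1.mono inter_subset_left ⟨_, ha⟩)
  have h := G.cutSize_add_cutSize_eq_inter_union X₃ (X₁ ∩ X₂)
  have hdX₃ := hX₃.1.2.1
  have hsub : X₃ ∪ X₁ ∩ X₂ ⊆ X₃ ∪ X₁ := union_subset_union subset_rfl inter_subset_left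
  have hD : G.IsDangerous A s k e (X₃ ∪ X₁ ∩ X₂) :=
    ⟨⟨union_subset hX₃.1.1.1 (inter_subset_left.trans hX₁.1.1.1),
        ⟨_, mem_union_left _ hX₃.1.2.2⟩, hroom.mono (sdiff_subset_sdiff subset_rfl hsub)⟩,
      by omega, mem_union_left _ hX₃.1.2.2⟩
  exact subset_union_right.trans (hX₃.2 hD subset_union_left)

variable [Fintype V]

/-- By maximality `X ∪ Y` is not dangerous, so submodularity of `d` forces `d(X ∩ Y) ≤ 2k` and
leaves room for only one edge from `X ∩ Y` to the outside of `X ∪ Y`, namely `e`. -/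
theorem maximal_isDangerous_pair (hA : G.SupportedOn A)
    (hconn : G.EdgeConnectedOn (A.erase s) (2 * k)) (heven : Even (G.cutSize {s}))
    (he : G.Crosses {s} e) (hX : Maximal (G.IsDangerous A s k e) X)
    (hY : Maximal (G.IsDangerous A s k e) Y) (hXY : X ≠ Y) :
    (A.erase s \ (X ∪ Y)).Nonempty ∧ G.cutSize (X ∩ Y) ≤ 2 * k ∧
      ∀ g, G.Joins (X ∩ Y) (X ∪ Y)ᶜ g → g = e := by
  have hXnY : ¬ X ⊆ Y := fun h => hXY (le_antisymm h (hX.2 hY.1 h))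
  have hYnX : ¬ Y ⊆ X := fun h => hXY (le_antisymm (hY.2 hX.1 h) h)
  have hroom : (A.erase s \ (X ∪ Y)).Nonempty := by
    by_contra hemp
    rw [not_nonempty_iff_eq_empty, sdiff_eq_empty_iff_subset] at hemp
    obtain ⟨g, hg, hgXY⟩ := exists_crosses_other_notMem_union hA hconn heven he hX.1 hY.1
    exact hgXY (hemp (mem_erase.2 ⟨hg.other_ne, hg.other_mem hA⟩))
  have hunion : 2 * k + 2 ≤ G.cutSize (X ∪ Y) := by
    by_contra! h
    have hD : G.IsDangerous A s k e (X ∪ Y) :=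
      ⟨⟨union_subset hX.1.1.1 hY.1.1.1, ⟨_, mem_union_left _ hX.1.2.2⟩, hroom⟩, by omega,
        mem_union_left _ hX.1.2.2⟩
    exact hYnX (subset_union_right.trans (hX.2 hD subset_union_left))
  have hinter := hconn _ (hX.1.1.mono inter_subset_left ⟨_, mem_inter.2 ⟨hX.1.2.2, hY.1.2.2⟩⟩)
  have hXY' := hconn _ (hX.1.1.mono sdiff_subset (sdiff_nonempty.2 hXnY))
  have hYX' := hconn _ (hY.1.1.mono sdiff_subset (sdiff_nonempty.2 hYnX))
  have h1 := G.cutSize_add_cutSize_eq_inter_union X Y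
  have h2 := G.cutSize_add_cutSize_eq_sdiff X Y
  have hdX := hX.1.2.1
  have hdY := hY.1.2.1
  refine ⟨hroom, by omega, fun g hg => ?_⟩
  have hle : G.numJoining (X ∩ Y) (X ∪ Y)ᶜ ≤ 1 := by omega
  have hsXY : s ∈ (X ∪ Y)ᶜ := by simp [hX.1.notMem, hY.1.notMem]
  exact card_le_one.1 hle _ (by simpa using hg) _
    (by simpa using he.joins (mem_inter.2 ⟨hX.1.2.2, hY.1.2.2⟩) hsXY)

/-- Three distinct maximal dangerous sets pairwise meet inside the third one, and their common
part would be a side of `A.erase s` whose only boundary edge is `e`. -/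
theorem not_three_maximal_isDangerous {X₁ X₂ X₃ : Finset V} (hk : 1 ≤ k)
    (hA : G.SupportedOn A) (hconn : G.EdgeConnectedOn (A.erase s) (2 * k))
    (heven : Even (G.cutSize {s})) (he : G.Crosses {s} e)
    (hX₁ : Maximal (G.IsDangerous A s k e) X₁) (hX₂ : Maximal (G.IsDangerous A s k e) X₂)
    (hX₃ : Maximal (G.IsDangerous A s k e) X₃) (h₁₂ : X₁ ≠ X₂) (h₁₃ : X₁ ≠ X₃) (h₂₃ : X₂ ≠ X₃) :
    False := by
  obtain ⟨r₁₂, t₁₂, u₁₂⟩ := maximal_isDangerous_pair hA hconn heven he hX₁ hX₂ h₁₂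
  obtain ⟨r₁₃, t₁₃, u₁₃⟩ := maximal_isDangerous_pair hA hconn heven he hX₁ hX₃ h₁₃
  obtain ⟨-, t₂₃, u₂₃⟩ := maximal_isDangerous_pair hA hconn heven he hX₂ hX₃ h₂₃
  have s₁₂ := inter_subset_of_maximal_isDangerous hconn hX₁ hX₂ hX₃ t₁₂ (union_comm X₁ X₃ ▸ r₁₃)
  have s₁₃ := inter_subset_of_maximal_isDangerous hconn hX₁ hX₃ hX₂ t₁₃ (union_comm X₁ X₂ ▸ r₁₂)
  have s₂₃ := inter_subset_of_maximal_isDangerous hconn hX₂ hX₃ hX₁ t₂₃ r₁₂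
  set D := X₁ ∩ X₂ ∩ X₃
  have hjoin : ∀ g p q, p ∈ D → q ∉ D → (∀ P Q : Finset V, p ∈ P → q ∈ Q → G.Joins P Q g) →
      g = e := by
    intro g p q hp hq hj
    simp only [D, mem_inter] at hp hq
    by_cases h₁ : q ∈ X₁ <;> by_cases h₂ : q ∈ X₂ <;> by_cases h₃ : q ∈ X₃
    · exact absurd ⟨⟨h₁, h₂⟩, h₃⟩ hq
    · exact absurd (s₁₂ (mem_inter.2 ⟨h₁, h₂⟩)) h₃
    · exact absurd (s₁₃ (mem_inter.2 ⟨h₁, h₃⟩)) h₂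
    · exact u₂₃ g (hj _ _ (by simp [hp]) (by simp [h₂, h₃]))
    · exact absurd (s₂₃ (mem_inter.2 ⟨h₂, h₃⟩)) h₁
    · exact u₁₃ g (hj _ _ (by simp [hp]) (by simp [h₁, h₃]))
    · exact u₁₂ g (hj _ _ (by simp [hp]) (by simp [h₁, h₂]))
    · exact u₁₂ g (hj _ _ (by simp [hp]) (by simp [h₁, h₂]))
  have hcut : G.cutSize D ≤ 1 := card_le_one.2 fun g hg g' hg' => by
    have hcross : ∀ g, G.Crosses D g → g = e := by
      rintro g (⟨h₁, h₂⟩ | ⟨h₁, h₂⟩)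
      · exact hjoin g _ _ h₁ h₂ fun P Q hP hQ => Or.inl ⟨hP, hQ⟩
      · exact hjoin g _ _ h₁ h₂ fun P Q hP hQ => Or.inr ⟨hP, hQ⟩
    rw [hcross g (mem_filter.1 hg).2, hcross g' (mem_filter.1 hg').2]
  have hside : IsSide (A.erase s) D :=
    hX₁.1.1.mono (inter_subset_left.trans inter_subset_left)
      ⟨G.other s e, by simp [D, hX₁.1.2.2, hX₂.1.2.2, hX₃.1.2.2]⟩
  have := hconn D hside
  omega

/-- Lovász's splitting lemma. Otherwise the far ends of all edges at `s` are covered by maximal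
dangerous sets; two of them never suffice, and three cannot exist. -/
theorem exists_splittable_pair (hk : 1 ≤ k) (hA : G.SupportedOn A)
    (hconn : G.EdgeConnectedOn (A.erase s) (2 * k)) (heven : Even (G.cutSize {s}))
    (he : G.Crosses {s} e) :
    ∃ f, f ≠ e ∧ G.Crosses {s} f ∧
      ∀ X, IsSide (A.erase s) X → G.other s e ∈ X → G.other s f ∈ X → 2 * k + 2 ≤ G.cutSize X := by
  by_contra! hdanger
  have hmax : ∀ g, g ≠ e → G.Crosses {s} g →
      ∃ X, Maximal (G.IsDangerous A s k e) X ∧ G.other s g ∈ X := fun g hge hg => by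
    obtain ⟨X, hX, hae, hag, hd⟩ := hdanger g hge hg
    obtain ⟨Y, hXY, hY⟩ :=
      Finite.exists_le_maximal (p := G.IsDangerous A s k e) ⟨hX, by omega, hae⟩
    exact ⟨Y, hY, hXY hag⟩
  have hcover : ∀ g, G.Crosses {s} g →
      ∃ X, Maximal (G.IsDangerous A s k e) X ∧ G.other s g ∈ X := by
    intro g hg
    by_cases hge : g = e
    · have hpos : 0 < G.cutSize {s} := card_pos.2 ⟨e, by simpa using he⟩
      have htwo : 1 < G.cutSize {s} := by obtain ⟨m, hm⟩ := heven; omega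
      obtain ⟨f, hf, hfe⟩ := exists_mem_ne htwo e
      obtain ⟨X, hX, -⟩ := hmax f hfe (mem_filter.1 hf).2
      exact ⟨X, hX, hge ▸ hX.1.2.2⟩
    · exact hmax g hge hg
  obtain ⟨X₁, hX₁, -⟩ := hcover e he
  obtain ⟨g₂, hg₂, hg₂X⟩ := exists_crosses_other_notMem_union hA hconn heven he hX₁.1 hX₁.1
  obtain ⟨X₂, hX₂, hg₂X₂⟩ := hcover g₂ hg₂
  obtain ⟨g₃, hg₃, hg₃X⟩ := exists_crosses_other_notMem_union hA hconn heven he hX₁.1 hX₂.1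
  obtain ⟨X₃, hX₃, hg₃X₃⟩ := hcover g₃ hg₃
  refine not_three_maximal_isDangerous hk hA hconn heven he hX₁ hX₂ hX₃ ?_ ?_ ?_
  · rintro rfl; simp_all
  · rintro rfl; simp_all
  · rintro rfl; simp_all

end Lovasz

section Tight

variable [Fintype E] {G} {A X Y : Finset V} {k : ℕ}

/-- `Z` is `X ∩ Y` or `X \ Y`, according to whether `X ∪ Y` is a side. -/
theorem exists_tight_ssubset [Fintype V] (hconn : G.EdgeConnectedOn A (2 * k)) (hX : IsSide A X)
    (hXt : G.cutSize X = 2 * k) (hY : IsSide A Y) (hYt : G.cutSize Y = 2 * k)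
    (hin : (X ∩ Y).Nonempty) (hout : (X \ Y).Nonempty) :
    ∃ Z ⊂ X, IsSide A Z ∧ G.cutSize Z = 2 * k := by
  by_cases hroom : (A \ (X ∪ Y)).Nonempty
  · have hI := hconn _ (hX.mono inter_subset_left hin)
    have hU := hconn (X ∪ Y) ⟨union_subset hX.1 hY.1, hin.mono (inter_subset_left.trans
      subset_union_left), hroom⟩
    have h := G.cutSize_add_cutSize_eq_inter_union X Y
    refine ⟨X ∩ Y, ?_, hX.mono inter_subset_left hin, by omega⟩
    rw [← sdiff_sdiff_self_left]
    exact sdiff_ssubset sdiff_subset hout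
  · rw [not_nonempty_iff_eq_empty, sdiff_eq_empty_iff_subset] at hroom
    have hYX : (Y \ X).Nonempty := by
      obtain ⟨a, ha⟩ := hX.2.2
      obtain ⟨haA, haX⟩ := mem_sdiff.1 ha
      exact ⟨a, mem_sdiff.2 ⟨(mem_union.1 (hroom haA)).resolve_left haX, haX⟩⟩
    have h₁ := hconn _ (hX.mono sdiff_subset hout)
    have h₂ := hconn (Y \ X) ⟨sdiff_subset.trans hY.1, hYX, hX.2.1.mono fun x hx =>
      mem_sdiff.2 ⟨hX.1 hx, fun h => (mem_sdiff.1 h).2 hx⟩⟩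
    have h := G.cutSize_add_cutSize_eq_sdiff X Y
    refine ⟨X \ Y, ?_, hX.mono sdiff_subset hout, by omega⟩
    rw [← sdiff_inter_self_left]
    exact sdiff_ssubset inter_subset_left hin

/-- An inclusion-minimal tight side is a single vertex: otherwise the handshake count gives an edge
inside it, and a tight side through that edge uncrosses it. -/
theorem exists_cutSize_singleton_eq [Fintype V] (hk : 1 ≤ k) (hconn : G.EdgeConnectedOn A (2 * k))
    (hA : 1 < #A)
    (htight : ∀ g, ¬ G.IsLoop g → ∃ X, IsSide A X ∧ G.cutSize X = 2 * k ∧ G.Crosses X g) :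
    ∃ s ∈ A, G.cutSize {s} = 2 * k := by
  obtain ⟨a, ha⟩ := card_pos.1 (by omega : 0 < #A)
  have hpos : 0 < G.cutSize {a} := by have := hconn _ (isSide_singleton ha hA); omega
  obtain ⟨g, hg⟩ := card_pos.1 hpos
  obtain ⟨X, hX, hXt, -⟩ := htight g (Crosses.not_isLoop (mem_filter.1 hg).2)
  obtain ⟨X₀, -, hmin⟩ := exists_minimal_le_of_wellFoundedLT
    (fun X => IsSide A X ∧ G.cutSize X = 2 * k) X ⟨hX, hXt⟩
  have hcard : #X₀ ≤ 1 := by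
    by_contra! hcard
    have hsum := G.sum_cutSize_singleton X₀
    have hle := card_nsmul_le_sum X₀ (fun v => G.cutSize {v}) (2 * k)
      fun v hv => hconn _ (isSide_singleton (hmin.1.1.1 hv) hA)
    have hmul : 2 * (2 * k) ≤ #X₀ * (2 * k) := Nat.mul_le_mul_right _ hcard
    rw [smul_eq_mul] at hle
    obtain ⟨g, hg⟩ := card_pos.1 (by rw [hmin.1.2] at hsum; omega :
      0 < #{e | ¬ G.IsLoop e ∧ G.fst e ∈ X₀ ∧ G.snd e ∈ X₀})
    obtain ⟨hgl, hg₁, hg₂⟩ := (mem_filter.1 hg).2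
    obtain ⟨Y, hY, hYt, hYg⟩ := htight g hgl
    have hsplit : (X₀ ∩ Y).Nonempty ∧ (X₀ \ Y).Nonempty := by
      rcases hYg with ⟨h₁, h₂⟩ | ⟨h₁, h₂⟩
      · exact ⟨⟨_, mem_inter.2 ⟨hg₁, h₁⟩⟩, ⟨_, mem_sdiff.2 ⟨hg₂, h₂⟩⟩⟩
      · exact ⟨⟨_, mem_inter.2 ⟨hg₂, h₁⟩⟩, ⟨_, mem_sdiff.2 ⟨hg₁, h₂⟩⟩⟩
    obtain ⟨Z, hZX, hZ⟩ := exists_tight_ssubset hconn hmin.1.1 hmin.1.2 hY hYt hsplit.1 hsplit.2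
    exact hZX.2 (hmin.2 hZ hZX.1)
  obtain ⟨s, hs⟩ := card_eq_one.1 (le_antisymm hcard (card_pos.2 hmin.1.1.2.1))
  exact ⟨s, hmin.1.1.1 (hs ▸ mem_singleton_self s), hs ▸ hmin.1.2⟩

end Tight

section Orientation

variable [Fintype E] {G G' : Multigraph V E} {o o' : E → Bool} {A : Finset V} {s : V} {k : ℕ}

theorem SupportedOn.erase_of_cutSize_eq_zero (hA : G.SupportedOn A)
    (hs : G.cutSize {s} = 0) : G.SupportedOn (A.erase s) := fun g => by
  have hg : ¬ G.Crosses {s} g := fun hg =>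
    absurd hs (card_pos.2 ⟨g, mem_filter.2 ⟨mem_univ _, hg⟩⟩).ne'
  rcases hA g with hl | ⟨h₁, h₂⟩
  · exact Or.inl hl
  · by_cases hl : G.IsLoop g
    · exact Or.inl hl
    · unfold Crosses IsLoop at *
      exact Or.inr ⟨mem_erase.2 ⟨fun h => hg (by simp_all), h₁⟩,
        mem_erase.2 ⟨fun h => hg (by simp_all), h₂⟩⟩

theorem EdgeConnectedOn.splitOff {e f : E}
    (hconn : G.EdgeConnectedOn (A.erase s) (2 * k)) (hef : e ≠ f) (he : G.Crosses {s} e)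
    (hf : G.Crosses {s} f)
    (hsplit : ∀ X, IsSide (A.erase s) X → G.other s e ∈ X → G.other s f ∈ X →
      2 * k + 2 ≤ G.cutSize X) :
    (G.splitOff s e f).EdgeConnectedOn (A.erase s) (2 * k) := fun X hX => by
  have h := cutSize_splitOff_add hef he hf X
  have hsX : s ∉ X := fun h => (mem_erase.1 (hX.1 h)).1 rfl
  by_cases hab : G.other s e ∈ X ∧ G.other s f ∈ X
  · have := hsplit X hX hab.1 hab.2
    rw [if_pos (by tauto)] at h
    omega
  · have := hconn X hX
    rw [if_neg (by tauto)] at h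
    omega

/-- Each split pair lifts to one arc leaving and one arc entering `s`. -/
theorem exists_complete_splitting [Fintype V] (hk : 1 ≤ k) (n : ℕ) :
    ∀ G : Multigraph V E, G.SupportedOn A → G.EdgeConnectedOn (A.erase s) (2 * k) →
      G.cutSize {s} = 2 * n →
      ∃ G' : Multigraph V E, G'.SupportedOn (A.erase s) ∧ G'.EdgeConnectedOn (A.erase s) (2 * k) ∧
        ∀ o', ∃ o, (∀ X, G'.outDeg o' X ≤ G.outDeg o X) ∧
          n ≤ G.outDeg o {s} ∧ n ≤ G.outDeg o {s}ᶜ := by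
  induction n with
  | zero =>
    exact fun G hA hconn hs => ⟨G, hA.erase_of_cutSize_eq_zero hs, hconn,
      fun o => ⟨o, fun _ => le_rfl, Nat.zero_le _, Nat.zero_le _⟩⟩
  | succ n ih =>
    intro G hA hconn hs
    obtain ⟨e, he⟩ := card_pos.1 (show 0 < G.cutSize {s} by omega)
    replace he := (mem_filter.1 he).2
    obtain ⟨f, hfe, hf, hsplit⟩ := exists_splittable_pair hk hA hconn ⟨n + 1, by omega⟩ he
    have hef := Ne.symm hfe
    have hconn₁ := hconn.splitOff hef he hf hsplit
    have hs₁ : (G.splitOff s e f).cutSize {s} = 2 * n := by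
      have h := cutSize_splitOff_add hef he hf {s}
      rw [if_pos (by simp [he.other_ne, hf.other_ne])] at h
      omega
    obtain ⟨G', hA', hconn', hlift⟩ := ih _ (hA.splitOff hef he hf) hconn₁ hs₁
    refine ⟨G', hA', hconn', fun o' => ?_⟩
    obtain ⟨o, hle, hout, hin⟩ := hlift o'
    have hX := outDeg_splitOff_add_le hef he hf o
    have hout' := hX {s}
    have hin' := hX {s}ᶜ
    rw [if_pos (by simp [he.other_ne, hf.other_ne])] at hout' hin'
    exact ⟨G.liftOrientation s e f o, fun X => (hle X).trans (le_of_add_le_left (hX X)),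
      by omega, by omega⟩


theorem outDeg_erase_of_supportedOn {B : Finset V} (hB : G.SupportedOn B) (hs : s ∉ B)
    (X : Finset V) : G.outDeg o (X.erase s) = G.outDeg o X := by
  unfold outDeg
  congr 1
  refine filter_congr fun g _ => ?_
  by_cases hg : G.tailO o g = G.headO o g
  · simp [hg]
  · obtain ⟨h₁, h₂⟩ := hB.tailO_headO_mem hg
    simp [mem_erase, ne_of_mem_of_not_mem h₁ hs, ne_of_mem_of_not_mem h₂ hs]

/-- Sides containing `s` lose no arcs when `s` is removed from them, and the sides `{s}` and
`A.erase s` are handled by the arcs at `s`. -/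
theorem le_outDeg_of_lift [Fintype V] (hA : G.SupportedOn A) (hA' : G'.SupportedOn (A.erase s))
    (ho' : ∀ X, IsSide (A.erase s) X → k ≤ G'.outDeg o' X)
    (hle : ∀ X, G'.outDeg o' X ≤ G.outDeg o X)
    (hout : k ≤ G.outDeg o {s}) (hin : k ≤ G.outDeg o {s}ᶜ) {X : Finset V} (hX : IsSide A X) :
    k ≤ G.outDeg o X := by
  by_cases hsX : s ∈ X
  · by_cases hXs : (X.erase s).Nonempty
    · have hside : IsSide (A.erase s) (X.erase s) := by
        refine ⟨erase_subset_erase s hX.1, hXs, ?_⟩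
        obtain ⟨y, hy⟩ := hX.2.2
        obtain ⟨hyA, hyX⟩ := mem_sdiff.1 hy
        exact ⟨y, by simp [hyA, hyX, ne_of_mem_of_not_mem hsX hyX |>.symm]⟩
      calc k ≤ G'.outDeg o' (X.erase s) := ho' _ hside
        _ = G'.outDeg o' X := outDeg_erase_of_supportedOn hA' (notMem_erase s A) X
        _ ≤ G.outDeg o X := hle X
    · rw [not_nonempty_iff_eq_empty, erase_eq_empty_iff] at hXs
      rcases hXs with rfl | rfl
      · exact absurd hsX (notMem_empty s)
      · exact hout
  · by_cases hroom : (A.erase s \ X).Nonempty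
    · have hside : IsSide (A.erase s) X :=
        ⟨fun x hx => mem_erase.2 ⟨ne_of_mem_of_not_mem hx hsX, hX.1 hx⟩, hX.2.1, hroom⟩
      exact (ho' X hside).trans (hle X)
    · rw [not_nonempty_iff_eq_empty, sdiff_eq_empty_iff_subset] at hroom
      refine hin.trans (card_le_card (monotone_filter_right _ fun g _ hg => ?_))
      simp only [mem_compl, mem_singleton, not_not] at hg
      have hA' := (hA.tailO_headO_mem (hg.2 ▸ hg.1 : G.tailO o g ≠ G.headO o g)).1
      exact ⟨hroom (mem_erase.2 ⟨hg.1, hA'⟩), hg.2 ▸ hsX⟩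

theorem exists_orientation_le_outDeg [Fintype V] (k : ℕ) (A : Finset V) :
    ∀ G : Multigraph V E, G.SupportedOn A → G.EdgeConnectedOn A (2 * k) →
      ∃ o, ∀ X, IsSide A X → k ≤ G.outDeg o X := by
  rcases Nat.eq_zero_or_pos k with rfl | hk
  · exact fun _ _ _ => ⟨fun _ => true, fun _ _ => Nat.zero_le _⟩
  induction A using Finset.strongInduction with | H A ihA => ?_
  intro G
  induction hn : #{g | ¬ G.IsLoop g} using Nat.strong_induction_on generalizing G with
  | _ n ihG => ?_
  intro hA hconn
  by_cases hdel : ∃ g, ¬ G.IsLoop g ∧ (G.deleteEdge g).EdgeConnectedOn A (2 * k)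
  · obtain ⟨g, hg, hconn'⟩ := hdel
    obtain ⟨o, ho⟩ := ihG _ (hn ▸ card_nonloop_deleteEdge_lt hg) _ rfl (hA.deleteEdge g) hconn'
    exact ⟨o, fun X hX => (ho X hX).trans (outDeg_deleteEdge_le o X)⟩
  by_cases hcard : #A ≤ 1
  · exact ⟨fun _ => true, fun X hX => absurd hX.one_lt_card (by omega)⟩
  obtain ⟨s, hsA, hs⟩ := exists_cutSize_singleton_eq hk hconn (by omega) fun g hg =>
    exists_tight_crosses hconn fun h => hdel ⟨g, hg, h⟩
  obtain ⟨G', hA', hconn', hlift⟩ :=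
    exists_complete_splitting hk k G hA (fun X hX => hconn X hX.of_erase) hs
  obtain ⟨o', ho'⟩ := ihA _ (erase_ssubset hsA) G' hA' hconn'
  obtain ⟨o, hle, hout, hin⟩ := hlift o'
  exact ⟨o, fun X hX => le_outDeg_of_lift hA hA' ho' hle hout hin hX⟩

end Orientation

end

end NW.Multigraph

open NW in
/-- Every finite 2k-edge-connected multigraph has a k-arc-connected orientation. -/
theorem stmt0 {V E : Type} [Finite V] [Finite E] (G : Multigraph V E) (k : ℕ)
    (hconn : G.EdgeConnected (2 * k)) :
    ∃ o : E → Bool, ∀ v w : V, v ≠ w → G.DiConnAtLeast o v w k := by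
  have := Fintype.ofFinite V
  have := Fintype.ofFinite E
  obtain ⟨o, ho⟩ := exists_orientation_le_outDeg k Finset.univ G (fun e => Or.inr (by simp))
    hconn.edgeConnectedOn_univ
  exact ⟨o, fun v w _ => diConnAtLeast_of_le_outDeg fun X hv hw =>
    ho X ⟨Finset.subset_univ X, ⟨v, hv⟩, ⟨w, by simp [hw]⟩⟩⟩
end

section
/- With deg(s) = 4 and s not incident with a bridge, if a pair of edges at s is τ_A-admissible, then so is the complementary pair of the other two edges at s; consequently the lifting graph L(G,s,τ_A) is a union of perfect matchings on its four vertices. -/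
open NW NW.Multigraph

/-!
Let `p, q, r, t` be the four edges at `s`. Lifting `p, q` leaves `s` with the edges `r, t`,
lifting `r, t` leaves it with `p, q`, and after suppressing `s` the two lifts are the same graph.
So a trail of `G.lift s p q` with both ends other than `s` is rerouted into `G.lift s r t` by
running the lifted edge `p` through `s` along `p, q`, and replacing a passage `r, t` through `s`
by the lifted edge `r`. This preserves edge-disjointness, hence admissibility of `p, q` gives that
of `r, t`, whatever the requirement `τ`. On four vertices, a graph closed under taking
complementary pairs is a union of perfect matchings.
-/

namespace NW.Multigraph

variable {V E : Type} {G : Multigraph V E} {s x y : V}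

section Walks

set_option linter.deprecated false in
theorem isWalk_nil : G.IsWalk x y [] ↔ x = y := by
  simp [IsWalk, List.Chain']

set_option linter.deprecated false in
theorem isWalk_cons {a : E × Bool} {l : List (E × Bool)} :
    G.IsWalk x y (a :: l) ↔ G.src a = x ∧ G.IsWalk (G.dst a) y l := by
  rcases l with _ | ⟨b, l⟩
  · simp [IsWalk, List.Chain', eq_comm, and_comm]
  · simp only [IsWalk, List.Chain', List.isChain_cons_cons, reduceCtorEq, false_and,
      List.head?_cons, Option.some.injEq, List.getLast?_cons_cons, exists_and_left,
      exists_eq_left', false_or]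
    grind

theorem src_not (e : E) (b : Bool) : G.src (e, !b) = G.dst (e, b) := by
  cases b <;> rfl

theorem dst_not (e : E) (b : Bool) : G.dst (e, !b) = G.src (e, b) := by
  cases b <;> rfl

end Walks

section StepsAt

variable {e : E} {b : Bool}

theorem other_ne (hl : G.fst e ≠ G.snd e) : G.other s e ≠ s := by
  unfold other
  split_ifs with h
  · exact fun h' => hl (h.trans h'.symm)
  · exact h

theorem inc_of_src_eq (h : G.src (e, b) = s) : G.Inc e s := by
  cases b
  · exact Or.inr h
  · exact Or.inl h

theorem exists_step_into (he : G.Inc e s) (hl : G.fst e ≠ G.snd e) :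
    ∃ b, G.src (e, b) = G.other s e ∧ G.dst (e, b) = s := by
  unfold other
  rcases he with h | h
  · exact ⟨false, by simp [src, dst, h]⟩
  · have hf : G.fst e ≠ s := fun h' => hl (h'.trans h.symm)
    exact ⟨true, by simp [src, dst, h, hf]⟩

theorem src_dst_of_src_ne (he : G.Inc e s) (hl : G.fst e ≠ G.snd e) (h : G.src (e, b) ≠ s) :
    G.src (e, b) = G.other s e ∧ G.dst (e, b) = s := by
  obtain ⟨b₀, h₀⟩ := exists_step_into he hl
  rcases Bool.eq_or_eq_not b b₀ with rfl | rfl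
  · exact h₀
  · exact absurd ((src_not e b₀).trans h₀.2) h

theorem dst_of_src_eq (he : G.Inc e s) (hl : G.fst e ≠ G.snd e) (h : G.src (e, b) = s) :
    G.dst (e, b) = G.other s e := by
  obtain ⟨b₀, h₀⟩ := exists_step_into he hl
  rcases Bool.eq_or_eq_not b b₀ with rfl | rfl
  · exact absurd (h₀.1.symm.trans h) (other_ne hl)
  · exact (dst_not e b₀).trans h₀.1

theorem dst_ne_of_not_inc (he : ¬ G.Inc e s) : G.dst (e, b) ≠ s := by
  rw [← src_not]
  exact fun h => he (inc_of_src_eq h)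

theorem exists_isWalk_cons_cons {a c : E} {l : List (E × Bool)}
    (ha : G.Inc a s) (hla : G.fst a ≠ G.snd a) (hc : G.Inc c s) (hlc : G.fst c ≠ G.snd c)
    (hw : G.IsWalk (G.other s c) y l) :
    ∃ βa βc, G.IsWalk (G.other s a) y ((a, βa) :: (c, βc) :: l) := by
  obtain ⟨βa, hsa, hda⟩ := exists_step_into ha hla
  obtain ⟨βc, hsc, hdc⟩ := exists_step_into hc hlc
  refine ⟨βa, !βc, ?_⟩
  rw [isWalk_cons, isWalk_cons, src_not, dst_not, hda, hdc, hsc]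
  exact ⟨hsa, rfl, hw⟩

end StepsAt

section Lift

variable {a c : E} {e : {e : E // e ≠ c}} {β : Bool}

theorem lift_fst_of_ne (h : e.1 ≠ a) : (G.lift s a c).fst e = G.fst e.1 := if_neg h

theorem lift_snd_of_ne (h : e.1 ≠ a) : (G.lift s a c).snd e = G.snd e.1 := if_neg h

theorem lift_src_of_ne (h : e.1 ≠ a) : (G.lift s a c).src (e, β) = G.src (e.1, β) := by
  simp only [src, lift_fst_of_ne h, lift_snd_of_ne h]

theorem lift_dst_of_ne (h : e.1 ≠ a) : (G.lift s a c).dst (e, β) = G.dst (e.1, β) := by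
  simp only [dst, lift_fst_of_ne h, lift_snd_of_ne h]

theorem lift_inc_iff_of_ne (h : e.1 ≠ a) : (G.lift s a c).Inc e s ↔ G.Inc e.1 s := by
  simp only [Inc, lift_fst_of_ne h, lift_snd_of_ne h]

theorem lift_other_of_ne (h : e.1 ≠ a) : (G.lift s a c).other s e = G.other s e.1 := by
  unfold other
  rw [lift_fst_of_ne h, lift_snd_of_ne h]

theorem lift_src_self (h : a ≠ c) :
    (G.lift s a c).src (⟨a, h⟩, β) = if β then G.other s a else G.other s c := by
  cases β <;> simp [src, lift]

theorem lift_dst_self (h : a ≠ c) :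
    (G.lift s a c).dst (⟨a, h⟩, β) = if β then G.other s c else G.other s a := by
  cases β <;> simp [dst, lift]

theorem lift_src_self_ne (hl : ∀ e, G.Inc e s → G.fst e ≠ G.snd e) (ha : G.Inc a s)
    (hc : G.Inc c s) (h : a ≠ c) : (G.lift s a c).src (⟨a, h⟩, β) ≠ s := by
  rw [lift_src_self]
  split_ifs
  · exact other_ne (hl a ha)
  · exact other_ne (hl c hc)

theorem exists_isWalk_lift_cons_cons {r t : E} {l : List ({e : E // e ≠ t} × Bool)}
    (hl : ∀ e, G.Inc e s → G.fst e ≠ G.snd e) (hat : a ≠ t) (har : a ≠ r) (hct : c ≠ t)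
    (hcr : c ≠ r) (ha : G.Inc a s) (hc : G.Inc c s)
    (hw : (G.lift s r t).IsWalk (G.other s c) y l) :
    ∃ βa βc, (G.lift s r t).IsWalk (G.other s a) y ((⟨a, hat⟩, βa) :: (⟨c, hct⟩, βc) :: l) := by
  have har' : (⟨a, hat⟩ : {e : E // e ≠ t}).1 ≠ r := har
  have hcr' : (⟨c, hct⟩ : {e : E // e ≠ t}).1 ≠ r := hcr
  have key := exists_isWalk_cons_cons (G := G.lift s r t) (s := s) (a := ⟨a, hat⟩)
    (c := ⟨c, hct⟩) (y := y) (l := l)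
  simp only [lift_inc_iff_of_ne har', lift_inc_iff_of_ne hcr', lift_fst_of_ne har',
    lift_snd_of_ne har', lift_fst_of_ne hcr', lift_snd_of_ne hcr', lift_other_of_ne har',
    lift_other_of_ne hcr'] at key
  exact key ha (hl a ha) hc (hl c hc) hw

end Lift

structure FourEdgesAt (G : Multigraph V E) (s : V) (p q r t : E) : Prop where
  inc_iff : ∀ e, G.Inc e s ↔ e = p ∨ e = q ∨ e = r ∨ e = t
  fst_ne_snd : ∀ e, G.Inc e s → G.fst e ≠ G.snd e
  p_ne_q : p ≠ q
  p_ne_r : p ≠ r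
  p_ne_t : p ≠ t
  q_ne_r : q ≠ r
  q_ne_t : q ≠ t
  r_ne_t : r ≠ t

/-- `t` contributes nothing: a passage `r, t` through `s` becomes the single lifted edge, which is
named `r`. -/
def reliftEdges [DecidableEq E] (p q t e : E) : List E :=
  if e = p then [p, q] else if e = t then [] else [e]

def HasReroute [DecidableEq E] (G : Multigraph V E) (s : V) (p q r t : E) (x y : V)
    (l : List ({e : E // e ≠ q} × Bool)) : Prop :=
  ∃ l' : List ({e : E // e ≠ t} × Bool), (G.lift s r t).IsWalk x y l' ∧
    ((l'.map Prod.fst).map Subtype.val).Perm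
      (((l.map Prod.fst).map Subtype.val).flatMap (reliftEdges p q t))

variable {p q r t : E}

section Relift

variable [DecidableEq E]

theorem eq_of_mem_reliftEdges {c e₁ e₂ : E} (h₁ : c ∈ reliftEdges p q t e₁)
    (h₂ : c ∈ reliftEdges p q t e₂) (hq₁ : e₁ ≠ q) (hq₂ : e₂ ≠ q) : e₁ = e₂ := by
  unfold reliftEdges at h₁ h₂
  split_ifs at h₁ h₂ <;> simp_all

theorem nodup_flatMap_reliftEdges (hpq : p ≠ q) {L : List {e : E // e ≠ q}} (h : L.Nodup) :
    ((L.map Subtype.val).flatMap (reliftEdges p q t)).Nodup := by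
  refine List.nodup_flatMap.2 ⟨fun e _ => ?_, ?_⟩
  · unfold reliftEdges
    split_ifs <;> simp [hpq]
  · refine ((List.nodup_map_iff Subtype.val_injective).2 h).imp_of_mem
      fun {e₁ e₂} h₁ h₂ hne c hc₁ hc₂ => ?_
    obtain ⟨e₁, -, rfl⟩ := List.mem_map.1 h₁
    obtain ⟨e₂, -, rfl⟩ := List.mem_map.1 h₂
    exact hne (eq_of_mem_reliftEdges hc₁ hc₂ e₁.2 e₂.2)

theorem disjoint_flatMap_reliftEdges {L₁ L₂ : List {e : E // e ≠ q}} (h : L₁.Disjoint L₂) :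
    ((L₁.map Subtype.val).flatMap (reliftEdges p q t)).Disjoint
      ((L₂.map Subtype.val).flatMap (reliftEdges p q t)) := by
  intro c hc₁ hc₂
  obtain ⟨_, hv₁, hc₁⟩ := List.mem_flatMap.1 hc₁
  obtain ⟨_, hv₂, hc₂⟩ := List.mem_flatMap.1 hc₂
  obtain ⟨e₁, he₁, rfl⟩ := List.mem_map.1 hv₁
  obtain ⟨e₂, he₂, rfl⟩ := List.mem_map.1 hv₂
  obtain rfl : e₁ = e₂ := Subtype.ext (eq_of_mem_reliftEdges hc₁ hc₂ e₁.2 e₂.2)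
  exact h he₁ he₂

end Relift

namespace FourEdgesAt

theorem p_inc (hG : G.FourEdgesAt s p q r t) : G.Inc p s := (hG.inc_iff p).2 (Or.inl rfl)

theorem q_inc (hG : G.FourEdgesAt s p q r t) : G.Inc q s :=
  (hG.inc_iff q).2 (Or.inr (Or.inl rfl))

theorem lift_step_from (hG : G.FourEdgesAt s p q r t) {e : {e : E // e ≠ q}} {β : Bool}
    (h : (G.lift s p q).src (e, β) = s) :
    e.1 ≠ p ∧ G.Inc e.1 s ∧ (G.lift s p q).dst (e, β) = G.other s e.1 := by
  have hep : e.1 ≠ p := by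
    obtain ⟨e, he⟩ := e
    rintro rfl
    exact lift_src_self_ne hG.fst_ne_snd hG.p_inc hG.q_inc he h
  rw [lift_src_of_ne hep] at h
  have hes := inc_of_src_eq h
  exact ⟨hep, hes, (lift_dst_of_ne hep).trans (dst_of_src_eq hes (hG.fst_ne_snd _ hes) h)⟩

section Reroute

variable [DecidableEq E]

theorem hasReroute_cons_lifted (hG : G.FourEdgesAt s p q r t)
    {l : List ({e : E // e ≠ q} × Bool)} {h : p ≠ q} {β : Bool}
    (hx : (G.lift s p q).src (⟨p, h⟩, β) = x)
    (hl : G.HasReroute s p q r t ((G.lift s p q).dst (⟨p, h⟩, β)) y l) :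
    G.HasReroute s p q r t x y ((⟨p, h⟩, β) :: l) := by
  obtain ⟨l', hw, hperm⟩ := hl
  have hrel : reliftEdges p q t p = [p, q] := by simp [reliftEdges]
  rw [lift_src_self] at hx
  rw [lift_dst_self] at hw
  cases β <;> simp only [Bool.false_eq_true, if_false, if_true] at hx hw
  · obtain ⟨βq, βp, hw'⟩ := exists_isWalk_lift_cons_cons hG.fst_ne_snd hG.q_ne_t hG.q_ne_r
      hG.p_ne_t hG.p_ne_r hG.q_inc hG.p_inc hw
    refine ⟨_, hx ▸ hw', ?_⟩
    simp only [List.map_cons, List.flatMap_cons, hrel]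
    exact (List.Perm.swap p q _).trans (hperm.cons _ |>.cons _)
  · obtain ⟨βp, βq, hw'⟩ := exists_isWalk_lift_cons_cons hG.fst_ne_snd hG.p_ne_t hG.p_ne_r
      hG.q_ne_t hG.q_ne_r hG.p_inc hG.q_inc hw
    refine ⟨_, hx ▸ hw', ?_⟩
    simp only [List.map_cons, List.flatMap_cons, hrel]
    exact hperm.cons _ |>.cons _

theorem hasReroute_cons_cons_through (hG : G.FourEdgesAt s p q r t)
    {l : List ({e : E // e ≠ q} × Bool)}
    {e e₂ : {e : E // e ≠ q}} {β β₂ : Bool} (hep : e.1 ≠ p) (hes : G.Inc e.1 s)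
    (hx : G.other s e.1 = x) (he₂p : e₂.1 ≠ p) (he₂s : G.Inc e₂.1 s) (hne : e.1 ≠ e₂.1)
    (hl : G.HasReroute s p q r t (G.other s e₂.1) y l) :
    G.HasReroute s p q r t x y ((e, β) :: (e₂, β₂) :: l) := by
  obtain ⟨l', hw, hperm⟩ := hl
  have hpair : (e.1 = r ∧ e₂.1 = t) ∨ (e.1 = t ∧ e₂.1 = r) := by
    have := (hG.inc_iff e.1).1 hes
    have := (hG.inc_iff e₂.1).1 he₂s
    have := e.2
    have := e₂.2
    grind
  rcases hpair with ⟨h₁, h₂⟩ | ⟨h₁, h₂⟩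
  · refine ⟨(⟨r, hG.r_ne_t⟩, true) :: l', ?_, ?_⟩
    · rw [h₂] at hw
      rw [h₁] at hx
      rw [isWalk_cons, lift_src_self, lift_dst_self]
      exact ⟨hx, hw⟩
    · simpa [reliftEdges, h₁, h₂, hG.p_ne_r.symm, hG.r_ne_t, hG.p_ne_t.symm]
        using hperm.cons r
  · refine ⟨(⟨r, hG.r_ne_t⟩, false) :: l', ?_, ?_⟩
    · rw [h₂] at hw
      rw [h₁] at hx
      rw [isWalk_cons, lift_src_self, lift_dst_self]
      exact ⟨hx, hw⟩
    · simpa [reliftEdges, h₁, h₂, hG.p_ne_r.symm, hG.r_ne_t, hG.p_ne_t.symm]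
        using hperm.cons r

theorem hasReroute_cons_of_not_inc (hG : G.FourEdgesAt s p q r t)
    {l : List ({e : E // e ≠ q} × Bool)}
    {e : {e : E // e ≠ q}} {β : Bool} (hes : ¬ G.Inc e.1 s) (hx : G.src (e.1, β) = x)
    (hl : G.HasReroute s p q r t (G.dst (e.1, β)) y l) :
    G.HasReroute s p q r t x y ((e, β) :: l) := by
  obtain ⟨l', hw, hperm⟩ := hl
  have het : e.1 ≠ t := fun h => hes (h ▸ (hG.inc_iff t).2 (by simp))
  have her : (⟨e.1, het⟩ : {e : E // e ≠ t}).1 ≠ r :=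
    fun h => hes (h ▸ (hG.inc_iff r).2 (by simp))
  have hep : e.1 ≠ p := fun h => hes (h ▸ hG.p_inc)
  refine ⟨(⟨e.1, het⟩, β) :: l', ?_, ?_⟩
  · rw [isWalk_cons, lift_src_of_ne her, lift_dst_of_ne her]
    exact ⟨hx, hw⟩
  · simpa [reliftEdges, hep, het] using hperm.cons e.1

theorem hasReroute (hG : G.FourEdgesAt s p q r t) (hy : y ≠ s) :
    ∀ (l : List ({e : E // e ≠ q} × Bool)) (x : V), x ≠ s → (G.lift s p q).IsWalk x y l →
      (l.map Prod.fst).Nodup → G.HasReroute s p q r t x y l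
  | [], x, _, hw, _ => ⟨[], by rwa [isWalk_nil] at hw ⊢, by simp⟩
  | (e, β) :: l, x, hx, hw, hnd => by
    rw [isWalk_cons] at hw
    obtain ⟨hsrc, hw⟩ := hw
    rw [List.map_cons, List.nodup_cons] at hnd
    by_cases hep : e.1 = p
    · obtain ⟨e, he⟩ := e
      dsimp only at hep
      subst e
      refine hG.hasReroute_cons_lifted hsrc (hasReroute hG hy l _ ?_ hw hnd.2)
      rw [← src_not]
      exact lift_src_self_ne hG.fst_ne_snd hG.p_inc hG.q_inc he
    rw [lift_src_of_ne hep] at hsrc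
    rw [lift_dst_of_ne hep] at hw
    by_cases hes : G.Inc e.1 s
    · -- the trail enters `s` along `r` or `t`, and leaves it at once since `y ≠ s`
      obtain ⟨hox, hds⟩ := src_dst_of_src_ne hes (hG.fst_ne_snd _ hes) (hsrc ▸ hx)
      rw [hds] at hw
      rcases l with _ | ⟨⟨e₂, β₂⟩, l⟩
      · exact absurd (isWalk_nil.1 hw).symm hy
      rw [isWalk_cons] at hw
      obtain ⟨he₂p, he₂s, hd₂⟩ := hG.lift_step_from hw.1
      rw [hd₂] at hw
      rw [List.map_cons, List.nodup_cons] at hnd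
      exact hG.hasReroute_cons_cons_through hep hes (hox.symm.trans hsrc) he₂p he₂s
        (fun h => hnd.1 (Subtype.ext h ▸ List.mem_cons_self))
        (hasReroute hG hy l _ (other_ne (hG.fst_ne_snd _ he₂s)) hw.2 hnd.2.2)
    · exact hG.hasReroute_cons_of_not_inc hes hsrc
        (hasReroute hG hy l _ (dst_ne_of_not_inc hes) hw hnd.2)

end Reroute

theorem connAtLeast_lift (hG : G.FourEdgesAt s p q r t) (hx : x ≠ s) (hy : y ≠ s) {m : ℕ}
    (h : (G.lift s p q).ConnAtLeast x y m) : (G.lift s r t).ConnAtLeast x y m := by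
  classical
  obtain ⟨F, hF, hdisj⟩ := h
  choose F' hF' hperm using fun i => hG.hasReroute hy (F i) x hx (hF i).1 (hF i).2
  refine ⟨F', fun i => ⟨hF' i, ?_⟩, fun i j hij => ?_⟩
  · exact ((hperm i).nodup_iff.2 (nodup_flatMap_reliftEdges hG.p_ne_q (hF i).2)).of_map _
  · refine List.Disjoint.of_map (f := Subtype.val) ?_
    exact (hperm i).disjoint_left.2 <| (hperm j).disjoint_right.2 <|
      disjoint_flatMap_reliftEdges (hdisj i j hij)

theorem admissible (hG : G.FourEdgesAt s p q r t) {τ : V → V → ℕ} (h : G.Admissible s τ p q) :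
    G.Admissible s τ r t :=
  fun x y hx hy => hG.connAtLeast_lift hx hy (h x y hx hy)

end FourEdgesAt

theorem ncard_inc_eq_deg [Finite E] (hl : ∀ e, G.Inc e s → G.fst e ≠ G.snd e) :
    {e | G.Inc e s}.ncard = G.deg s := by
  refine Set.ncard_union_eq (Set.disjoint_left.2 fun e h₁ h₂ => ?_) (Set.toFinite _)
    (Set.toFinite _)
  exact hl e (Or.inl h₁) (h₁.trans h₂.symm)

theorem liftingGraph_adj_of_adj_compl {τ : V → V → ℕ}
    (hl : ∀ e, G.Inc e s → G.fst e ≠ G.snd e)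
    (e₁ e₂ e₃ e₄ : {e : E // G.Inc e s}) (h₁₂ : e₁ ≠ e₂) (h₁₃ : e₁ ≠ e₃) (h₁₄ : e₁ ≠ e₄)
    (h₂₃ : e₂ ≠ e₃) (h₂₄ : e₂ ≠ e₄) (h₃₄ : e₃ ≠ e₄)
    (hcov : ∀ f, f = e₁ ∨ f = e₂ ∨ f = e₃ ∨ f = e₄) (h : (G.LiftingGraph s τ).Adj e₁ e₂) :
    (G.LiftingGraph s τ).Adj e₃ e₄ := by
  have hinc : ∀ e, G.Inc e s ↔ e = e₁.1 ∨ e = e₂.1 ∨ e = e₃.1 ∨ e = e₄.1 := by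
    refine fun e => ⟨fun he => ?_, ?_⟩
    · rcases hcov ⟨e, he⟩ with h | h | h | h <;> simp [← h]
    · rintro (rfl | rfl | rfl | rfl)
      exacts [e₁.2, e₂.2, e₃.2, e₄.2]
  have hne := fun {a b : {e : E // G.Inc e s}} (h : a ≠ b) => Subtype.coe_ne_coe.2 h
  refine ⟨h₃₄, Or.inl ?_⟩
  rcases h.2 with h | h
  · exact FourEdgesAt.admissible ⟨hinc, hl, hne h₁₂, hne h₁₃, hne h₁₄, hne h₂₃, hne h₂₄,
      hne h₃₄⟩ h
  · exact FourEdgesAt.admissible ⟨fun e => (hinc e).trans (by tauto), hl, hne h₁₂.symm,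
      hne h₂₃, hne h₂₄, hne h₁₃, hne h₁₄, hne h₃₄⟩ h

end NW.Multigraph

theorem SimpleGraph.exists_involutive_adj_of_card_eq_four {α : Type*} (L : SimpleGraph α)
    (hcard : Nat.card α = 4)
    (hcompl : ∀ a b c d : α, a ≠ b → a ≠ c → a ≠ d → b ≠ c → b ≠ d → c ≠ d →
      (∀ f, f = a ∨ f = b ∨ f = c ∨ f = d) → L.Adj a b → L.Adj c d)
    {u v : α} (huv : L.Adj u v) :
    ∃ m : α → α, Function.Involutive m ∧ (∀ w, m w ≠ w) ∧ (∀ w, L.Adj w (m w)) ∧ m u = v := by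
  classical
  have hne := huv.ne
  have htwo : ({u, v}ᶜ : Set α).ncard = 2 := by
    have : Finite α := Nat.finite_of_card_ne_zero (by omega)
    rw [Set.ncard_compl, Set.ncard_pair hne, hcard]
  obtain ⟨c, d, hcd, hset⟩ := Set.ncard_eq_two.1 htwo
  have hmem : ∀ f, ¬(f = u ∨ f = v) ↔ f = c ∨ f = d := by
    simpa [Set.ext_iff] using hset
  have hc := (hmem c).2 (Or.inl rfl)
  have hd := (hmem d).2 (Or.inr rfl)
  have hcov : ∀ f, f = u ∨ f = v ∨ f = c ∨ f = d := fun f => by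
    have := hmem f
    tauto
  have hcd' := hcompl u v c d hne (by tauto) (by tauto) (by tauto) (by tauto) hcd hcov huv
  refine ⟨fun w => if w = u then v else if w = v then u else if w = c then d else c,
    fun w => ?_, fun w => ?_, fun w => ?_, by simp⟩
  all_goals rcases hcov w with rfl | rfl | rfl | rfl
  all_goals grind [L.adj_symm]

open NW in
theorem stmt6_general {V E : Type} [Finite E] (G : Multigraph V E)
    (ℓ : ℕ)
    (A : Set V)
    (hloop : ∀ e, G.fst e ≠ G.snd e)
    (s : V)
    (hdeg : G.deg s = 4) :
    (∀ e1 e2 e3 e4 : {e : E // G.Inc e s},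
      e1 ≠ e2 → e1 ≠ e3 → e1 ≠ e4 → e2 ≠ e3 → e2 ≠ e4 → e3 ≠ e4 →
      (∀ f, f = e1 ∨ f = e2 ∨ f = e3 ∨ f = e4) →
      (G.LiftingGraph s (Multigraph.tauA A ℓ)).Adj e1 e2 →
      (G.LiftingGraph s (Multigraph.tauA A ℓ)).Adj e3 e4) ∧
    (∀ u v, (G.LiftingGraph s (Multigraph.tauA A ℓ)).Adj u v →
      ∃ m : {e : E // G.Inc e s} → {e : E // G.Inc e s}, Function.Involutive m ∧
        (∀ w, m w ≠ w) ∧ (∀ w, (G.LiftingGraph s (Multigraph.tauA A ℓ)).Adj w (m w)) ∧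
        m u = v) := by
  have hl : ∀ e, G.Inc e s → G.fst e ≠ G.snd e := fun e _ => hloop e
  have hcompl := liftingGraph_adj_of_adj_compl (τ := Multigraph.tauA A ℓ) hl
  have hcard : Nat.card {e : E // G.Inc e s} = 4 :=
    (Nat.card_coe_set_eq {e | G.Inc e s}).trans ((ncard_inc_eq_deg hl).trans hdeg)
  exact ⟨hcompl, fun u v => SimpleGraph.exists_involutive_adj_of_card_eq_four _ hcard hcompl⟩

open NW in
/-- With deg(s) = 4: if a pair at s is admissible then so is the complementary pair;
consequently the lifting graph is a union of perfect matchings. -/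
theorem stmt6 {V E : Type} [Finite V] [Finite E] (G : Multigraph V E)
    (ℓ : ℕ) (hl : 4 ≤ ℓ)
    (A : Set V) (hA : A ≠ Set.univ)
    (hconnA : ∀ x y, x ∈ A → y ∈ A → G.ConnAtLeast x y ℓ)
    (hedge : ∀ e, G.fst e ∈ A ∨ G.snd e ∈ A)
    (hloop : ∀ e, G.fst e ≠ G.snd e)
    (s : V) (hs : s ∉ A)
    (hbridge : ∀ e, G.Inc e s → ¬ G.IsBridge e)
    (hdeg : G.deg s = 4) :
    (∀ e1 e2 e3 e4 : {e : E // G.Inc e s},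
      e1 ≠ e2 → e1 ≠ e3 → e1 ≠ e4 → e2 ≠ e3 → e2 ≠ e4 → e3 ≠ e4 →
      (∀ f, f = e1 ∨ f = e2 ∨ f = e3 ∨ f = e4) →
      (G.LiftingGraph s (Multigraph.tauA A ℓ)).Adj e1 e2 →
      (G.LiftingGraph s (Multigraph.tauA A ℓ)).Adj e3 e4) ∧
    (∀ u v, (G.LiftingGraph s (Multigraph.tauA A ℓ)).Adj u v →
      ∃ m : {e : E // G.Inc e s} → {e : E // G.Inc e s}, Function.Involutive m ∧
        (∀ w, m w ≠ w) ∧ (∀ w, (G.LiftingGraph s (Multigraph.tauA A ℓ)).Adj w (m w)) ∧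
        m u = v) :=
  stmt6_general G ℓ A hloop s hdeg
end

section
/- Under the standing lifting assumptions (ℓ ≥ 4, A proper with λ ≥ ℓ within A, all edges incident to A, s ∉ A, deg(s) ≥ 4), if I1 and I2 are two distinct maximal independent sets of size at least 2 in L(G,s,τ_A) with corresponding dangerous sets D1, D2, then |I1 ∩ I2| ≤ 1; moreover if |I1 ∩ I2| = 1 and I1 ∪ I2 is not the full vertex set of L(G,s,τ_A), then ℓ is odd. -/
open NW NW.Multigraph

/-!
Write `d(X) = |δ(X)|`. Maximality makes `I₁ \ I₂` and `I₂ \ I₁` nonempty, so `D₁ \ D₂` and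
`D₂ \ D₁` both separate vertices of `A` and have `d ≥ ℓ`. An edge from `s` to `D₁ ∩ D₂` runs
from `D₁ ∩ D₂` to the outside of `D₁ ∪ D₂`, and such edges count twice in the posimodular
inequality `d(D₁ \ D₂) + d(D₂ \ D₁) + 2 e(D₁ ∩ D₂, V \ (D₁ ∪ D₂)) ≤ d(D₁) + d(D₂) ≤ 2ℓ + 2`;
hence there is at most one. If there is exactly one, every inequality is tight, and
`d(D₁ ∩ D₂) ≡ d(D₁) + d(D₁ \ D₂) = 2ℓ + 1 (mod 2)`. For even `ℓ` this forces
`d(D₁ ∩ D₂) ≥ ℓ + 1`, so by submodularity `d(D₁ ∪ D₂) ≤ ℓ + 1`. If some edge at `s` avoids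
`D₁ ∪ D₂`, this set is dangerous, and since no admissible lift can enter a dangerous set, its
edges at `s` form an independent set containing `I₁ ∪ I₂`, which maximality and `I₁ ≠ I₂` forbid.
-/

namespace NW.Multigraph

variable {V E : Type} {G : Multigraph V E}

lemma mem_cut_of_src_mem_of_dst_notMem {X : Set V} {p : E × Bool}
    (hsrc : G.src p ∈ X) (hdst : G.dst p ∉ X) : p.1 ∈ G.cut X := by
  rcases p with ⟨e, _ | _⟩
  · exact Or.inr ⟨hdst, hsrc⟩
  · exact Or.inl ⟨hsrc, hdst⟩

lemma IsWalk.eq_of_nil {x y : V} (hw : G.IsWalk x y []) : x = y := by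
  rcases hw.2 with ⟨-, h⟩ | ⟨_, _, h, -⟩
  · exact h
  · cases h

lemma IsWalk.of_cons {x y : V} {p : E × Bool} {l : List (E × Bool)}
    (hw : G.IsWalk x y (p :: l)) : G.src p = x ∧ G.IsWalk (G.dst p) y l := by
  obtain ⟨hchain, ⟨h, -⟩ | ⟨p', t, hp', ht, hsrc, hdst⟩⟩ := hw
  · cases h
  cases Option.some_injective _ hp'
  refine ⟨hsrc, hchain.tail, ?_⟩
  cases l with
  | nil => exact Or.inl ⟨rfl, by simp_all⟩
  | cons q l =>
    rw [List.getLast?_cons_cons] at ht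
    exact Or.inr ⟨q, t, rfl, ht, (List.isChain_cons_cons.mp hchain).1.symm, hdst⟩

lemma IsWalk.exists_mem_cut {X : Set V} :
    ∀ {l : List (E × Bool)} {x y : V}, G.IsWalk x y l → x ∈ X → y ∉ X →
      ∃ p ∈ l, p.1 ∈ G.cut X
  | [], _, _, hw, hx, hy => (hy (hw.eq_of_nil ▸ hx)).elim
  | p :: _, _, _, hw, hx, hy => by
    obtain ⟨rfl, hw'⟩ := hw.of_cons
    by_cases hd : G.dst p ∈ X
    · obtain ⟨q, hq, hcut⟩ := hw'.exists_mem_cut hd hy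
      exact ⟨q, List.mem_cons_of_mem _ hq, hcut⟩
    · exact ⟨p, List.mem_cons_self, mem_cut_of_src_mem_of_dst_notMem hx hd⟩

/-- The easy direction of Menger's theorem: each of the edge-disjoint paths uses its own
edge of `δ(X)`. -/
lemma ConnAtLeast.le_ncard_cut [Finite E] {x y : V} {m : ℕ} {X : Set V}
    (h : G.ConnAtLeast x y m) (hx : x ∈ X) (hy : y ∉ X) : m ≤ (G.cut X).ncard := by
  obtain ⟨f, htrail, hdisj⟩ := h
  choose p hp hcut using fun i => (htrail i).1.exists_mem_cut hx hy
  have hinj : Function.Injective fun i => (⟨(p i).1, hcut i⟩ : G.cut X) := by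
    intro i j hij
    by_contra hne
    have hij' : (p i).1 = (p j).1 := congrArg Subtype.val hij
    exact hdisj i j hne (List.mem_map_of_mem (hp i)) (hij' ▸ List.mem_map_of_mem (hp j))
  simpa [Nat.card_coe_set_eq] using Nat.card_le_card_of_injective _ hinj

section Counting

open Classical

lemma _root_.Set.ncard_eq_sum_ite {α : Type*} [Fintype α] (S : Set α) :
    S.ncard = ∑ a, if a ∈ S then 1 else 0 := by
  rw [Set.ncard_eq_toFinset_card' S, ← Set.filter_mem_univ_eq_toFinset, Finset.card_filter]

variable (G) [Finite E]

lemma ncard_cut_inter_add_ncard_cut_union_le (X Y : Set V) :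
    (G.cut (X ∩ Y)).ncard + (G.cut (X ∪ Y)).ncard ≤ (G.cut X).ncard + (G.cut Y).ncard := by
  have := Fintype.ofFinite E
  simp only [Set.ncard_eq_sum_ite, ← Finset.sum_add_distrib]
  refine Finset.sum_le_sum fun e _ => ?_
  by_cases h1 : G.fst e ∈ X <;> by_cases h2 : G.snd e ∈ X <;>
    by_cases h3 : G.fst e ∈ Y <;> by_cases h4 : G.snd e ∈ Y <;>
    simp [cut, h1, h2, h3, h4]

lemma ncard_cut_diff_add_ncard_cut_diff_le (X Y : Set V) :
    (G.cut (X \ Y)).ncard + (G.cut (Y \ X)).ncard + 2 * (G.between (X ∩ Y) (X ∪ Y)ᶜ).ncard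
      ≤ (G.cut X).ncard + (G.cut Y).ncard := by
  have := Fintype.ofFinite E
  simp only [Set.ncard_eq_sum_ite, Finset.mul_sum, ← Finset.sum_add_distrib]
  refine Finset.sum_le_sum fun e _ => ?_
  by_cases h1 : G.fst e ∈ X <;> by_cases h2 : G.snd e ∈ X <;>
    by_cases h3 : G.fst e ∈ Y <;> by_cases h4 : G.snd e ∈ Y <;>
    simp [cut, between, h1, h2, h3, h4]

lemma ncard_cut_inter_add_ncard_cut_diff (X Y : Set V) :
    (G.cut (X ∩ Y)).ncard + (G.cut (X \ Y)).ncard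
      = (G.cut X).ncard + 2 * (G.between (X ∩ Y) (X \ Y)).ncard := by
  have := Fintype.ofFinite E
  simp only [Set.ncard_eq_sum_ite, Finset.mul_sum, ← Finset.sum_add_distrib]
  refine Finset.sum_congr rfl fun e _ => ?_
  by_cases h1 : G.fst e ∈ X <;> by_cases h2 : G.snd e ∈ X <;>
    by_cases h3 : G.fst e ∈ Y <;> by_cases h4 : G.snd e ∈ Y <;>
    simp [cut, between, h1, h2, h3, h4]

end Counting

lemma ncard_between_le_one [Finite E] {ℓ : ℕ} {X Y : Set V}
    (hX : (G.cut X).ncard ≤ ℓ + 1) (hY : (G.cut Y).ncard ≤ ℓ + 1)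
    (hXY : ℓ ≤ (G.cut (X \ Y)).ncard) (hYX : ℓ ≤ (G.cut (Y \ X)).ncard) :
    (G.between (X ∩ Y) (X ∪ Y)ᶜ).ncard ≤ 1 := by
  have := G.ncard_cut_diff_add_ncard_cut_diff_le X Y
  omega

lemma ncard_cut_union_le_of_even [Finite E] {ℓ : ℕ} {X Y : Set V} (hℓ : Even ℓ)
    (hX : (G.cut X).ncard ≤ ℓ + 1) (hY : (G.cut Y).ncard ≤ ℓ + 1)
    (hXY : ℓ ≤ (G.cut (X \ Y)).ncard) (hYX : ℓ ≤ (G.cut (Y \ X)).ncard)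
    (hinter : ℓ ≤ (G.cut (X ∩ Y)).ncard) (hb : 1 ≤ (G.between (X ∩ Y) (X ∪ Y)ᶜ).ncard) :
    (G.cut (X ∪ Y)).ncard ≤ ℓ + 1 := by
  have := G.ncard_cut_diff_add_ncard_cut_diff_le X Y
  have := G.ncard_cut_inter_add_ncard_cut_diff X Y
  have := G.ncard_cut_inter_add_ncard_cut_union_le X Y
  obtain ⟨r, rfl⟩ := hℓ
  omega

lemma Inc.endpoints {e : E} {s : V} (he : G.Inc e s) :
    (G.fst e = s ∧ G.snd e = G.other s e) ∨ (G.snd e = s ∧ G.fst e = G.other s e) := by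
  unfold other
  split_ifs with h
  · exact Or.inl ⟨h, rfl⟩
  · exact Or.inr ⟨he.resolve_left h, rfl⟩

lemma Inc.other_mem {e : E} {s : V} {A : Set V} (he : G.Inc e s) (hs : s ∉ A)
    (hA : G.fst e ∈ A ∨ G.snd e ∈ A) : G.other s e ∈ A := by
  rcases he.endpoints with ⟨h, h'⟩ | ⟨h, h'⟩ <;> rw [h, h'] at hA <;> tauto

lemma Inc.mem_between {e : E} {s : V} {X Y : Set V} (he : G.Inc e s) (hs : s ∈ Y)
    (hX : G.other s e ∈ X) : e ∈ G.between X Y := by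
  rcases he.endpoints with ⟨h, h'⟩ | ⟨h, h'⟩
  · exact Or.inr ⟨h ▸ hs, h' ▸ hX⟩
  · exact Or.inl ⟨h' ▸ hX, h ▸ hs⟩

lemma Inc.mem_cut {e : E} {s : V} {D : Set V} (he : G.Inc e s) (hs : s ∉ D)
    (hD : G.other s e ∈ D) : e ∈ G.cut D := by
  rcases he.endpoints with ⟨h, h'⟩ | ⟨h, h'⟩
  · exact Or.inr ⟨h ▸ hs, h' ▸ hD⟩
  · exact Or.inl ⟨h' ▸ hD, h ▸ hs⟩

lemma ncard_le_ncard_between [Finite E] {s : V} {X Y : Set V} {I : Set {e : E // G.Inc e s}}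
    (hs : s ∈ Y) (hI : ∀ e ∈ I, G.other s e.1 ∈ X) : I.ncard ≤ (G.between X Y).ncard :=
  Set.ncard_le_ncard_of_injOn Subtype.val (fun e he => e.2.mem_between hs (hI e he))
    Subtype.val_injective.injOn

/-- Lifting two edges that both join `D` to `s ∉ D` removes both from `δ(D)` and adds nothing. -/
lemma ncard_cut_lift_add_two_le [Finite E] {s : V} {e f : E} {D : Set V} (hef : e ≠ f)
    (he : G.Inc e s) (hf : G.Inc f s) (hs : s ∉ D)
    (hoe : G.other s e ∈ D) (hof : G.other s f ∈ D) :
    ((G.lift s e f).cut D).ncard + 2 ≤ (G.cut D).ncard := by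
  have hpair : ({e, f} : Set E) ⊆ G.cut D := by
    rintro x (rfl | rfl)
    exacts [he.mem_cut hs hoe, hf.mem_cut hs hof]
  have hmaps : ∀ x ∈ (G.lift s e f).cut D, x.1 ∈ G.cut D \ {e, f} := by
    intro x hx
    by_cases hxe : x.1 = e
    · simp only [cut, lift, hxe, if_true, Set.mem_ofPred_eq] at hx
      tauto
    · simp only [cut, lift, hxe, if_false, Set.mem_ofPred_eq] at hx
      exact ⟨hx, by simp [hxe, x.2]⟩
  have hle := Set.ncard_le_ncard_of_injOn Subtype.val hmaps Subtype.val_injective.injOn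
  have hpair_le := Set.ncard_le_ncard hpair
  rw [Set.ncard_sdiff hpair, Set.ncard_pair hef] at hle
  rw [Set.ncard_pair hef] at hpair_le
  omega

lemma DangerousA.not_admissible [Finite E] {A D : Set V} {ℓ : ℕ} {s : V} {e f : E}
    (hD : G.DangerousA A ℓ D) (hsA : s ∉ A) (hsD : s ∉ D) (hef : e ≠ f)
    (he : G.Inc e s) (hf : G.Inc f s) (hoe : G.other s e ∈ D) (hof : G.other s f ∈ D) :
    ¬ G.Admissible s (tauA A ℓ) e f := by
  obtain ⟨⟨x, hxD, hxA⟩, ⟨y, hyA, hyD⟩, hcut⟩ := hD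
  intro hadm
  have hconn := hadm x y (ne_of_mem_of_not_mem hxA hsA) (ne_of_mem_of_not_mem hyA hsA)
  rw [tauA, if_pos ⟨hxA, hyA⟩] at hconn
  have := hconn.le_ncard_cut hxD hyD
  have := ncard_cut_lift_add_two_le hef he hf hsD hoe hof
  omega

lemma DangerousA.indepIn_liftingGraph [Finite E] {A D : Set V} {ℓ : ℕ} {s : V}
    (hD : G.DangerousA A ℓ D) (hsA : s ∉ A) (hsD : s ∉ D) :
    IndepIn (G.LiftingGraph s (tauA A ℓ)) {e | G.other s e.1 ∈ D} := by
  rintro e he f hf - ⟨hne, hadm | hadm⟩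
  · have hef : e.1 ≠ f.1 := Subtype.val_injective.ne hne
    exact hD.not_admissible hsA hsD hef e.2 f.2 he hf hadm
  · have hfe : f.1 ≠ e.1 := Subtype.val_injective.ne hne.symm
    exact hD.not_admissible hsA hsD hfe f.2 e.2 hf he hadm

end NW.Multigraph

open NW in
theorem stmt8_general {V E : Type} [Finite E] (G : Multigraph V E)
    (ℓ : ℕ)
    (A : Set V)
    (hconnA : ∀ x y, x ∈ A → y ∈ A → G.ConnAtLeast x y ℓ)
    (hedge : ∀ e, G.fst e ∈ A ∨ G.snd e ∈ A)
    (s : V) (hs : s ∉ A)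
    (I1 I2 : Set {e : E // G.Inc e s}) (hne : I1 ≠ I2)
    (hI1 : Multigraph.IndepIn (G.LiftingGraph s (Multigraph.tauA A ℓ)) I1)
    (hI2 : Multigraph.IndepIn (G.LiftingGraph s (Multigraph.tauA A ℓ)) I2)
    (hmax1 : ∀ J, Multigraph.IndepIn (G.LiftingGraph s (Multigraph.tauA A ℓ)) J →
      I1 ⊆ J → J = I1)
    (hmax2 : ∀ J, Multigraph.IndepIn (G.LiftingGraph s (Multigraph.tauA A ℓ)) J →
      I2 ⊆ J → J = I2)
    (D1 D2 : Set V)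
    (hD1 : G.DangerousA A ℓ D1) (hD2 : G.DangerousA A ℓ D2)
    (hsD1 : s ∉ D1) (hsD2 : s ∉ D2)
    (hI1D1 : ∀ e : {e : E // G.Inc e s}, e ∈ I1 ↔ G.other s e.1 ∈ D1)
    (hI2D2 : ∀ e : {e : E // G.Inc e s}, e ∈ I2 ↔ G.other s e.1 ∈ D2) :
    (I1 ∩ I2).ncard ≤ 1 ∧
      (((I1 ∩ I2).ncard = 1 ∧ I1 ∪ I2 ≠ Set.univ) → Odd ℓ) := by
  obtain rfl : I1 = {e | G.other s e.1 ∈ D1} := Set.ext hI1D1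
  obtain rfl : I2 = {e | G.other s e.1 ∈ D2} := Set.ext hI2D2
  have hsep (D : Set V) (x y : {e : E // G.Inc e s}) (hx : G.other s x.1 ∈ D)
      (hy : G.other s y.1 ∉ D) : ℓ ≤ (G.cut D).ncard :=
    (hconnA _ _ (x.2.other_mem hs (hedge _)) (y.2.other_mem hs (hedge _))).le_ncard_cut hx hy
  obtain ⟨a1, ha1, ha1'⟩ := Set.not_subset.mp fun h => hne (hmax1 _ hI2 h).symm
  obtain ⟨a2, ha2, ha2'⟩ := Set.not_subset.mp fun h => hne (hmax2 _ hI1 h)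
  have h12 : ℓ ≤ (G.cut (D1 \ D2)).ncard := hsep _ a1 a2 ⟨ha1, ha1'⟩ fun h => h.2 ha2
  have h21 : ℓ ≤ (G.cut (D2 \ D1)).ncard := hsep _ a2 a1 ⟨ha2, ha2'⟩ fun h => h.2 ha1
  have hsU : s ∉ D1 ∪ D2 := fun h => h.elim hsD1 hsD2
  have hcommon :=
    ncard_le_ncard_between (G := G) (X := D1 ∩ D2) (Y := (D1 ∪ D2)ᶜ) hsU fun _ he => he
  refine ⟨hcommon.trans (ncard_between_le_one hD1.2.2 hD2.2.2 h12 h21), ?_⟩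
  rintro ⟨hone, hunion⟩
  obtain ⟨e0, he0⟩ := Set.nonempty_of_ncard_ne_zero (hone ▸ one_ne_zero)
  obtain ⟨f, hf⟩ := (Set.ne_univ_iff_exists_notMem _).mp hunion
  by_contra hodd
  have hcutU := ncard_cut_union_le_of_even (Nat.not_odd_iff_even.mp hodd) hD1.2.2 hD2.2.2 h12 h21
    (hsep _ e0 a1 he0 fun h => ha1' h.2) (hone ▸ hcommon)
  have hDU : G.DangerousA A ℓ (D1 ∪ D2) :=
    ⟨⟨_, Or.inl he0.1, e0.2.other_mem hs (hedge _)⟩, ⟨_, f.2.other_mem hs (hedge _), hf⟩, hcutU⟩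
  have hJ := hmax1 _ (hDU.indepIn_liftingGraph hs hsU) fun _ => Or.inl
  exact hne (hmax2 _ hI1 fun e he => hJ ▸ Or.inr he)

open NW in
/-- Two distinct maximal independent sets of the lifting graph with corresponding
dangerous sets intersect in at most one vertex; if in exactly one and their union is
not everything, then ℓ is odd. -/
theorem stmt8 {V E : Type} [Finite V] [Finite E] (G : Multigraph V E)
    (ℓ : ℕ) (hl : 4 ≤ ℓ)
    (A : Set V) (hA : A ≠ Set.univ)
    (hconnA : ∀ x y, x ∈ A → y ∈ A → G.ConnAtLeast x y ℓ)
    (hedge : ∀ e, G.fst e ∈ A ∨ G.snd e ∈ A)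
    (hloop : ∀ e, G.fst e ≠ G.snd e)
    (s : V) (hs : s ∉ A)
    (hbridge : ∀ e, G.Inc e s → ¬ G.IsBridge e)
    (hdeg : 4 ≤ G.deg s)
    (I1 I2 : Set {e : E // G.Inc e s}) (hne : I1 ≠ I2)
    (hI1 : Multigraph.IndepIn (G.LiftingGraph s (Multigraph.tauA A ℓ)) I1)
    (hI2 : Multigraph.IndepIn (G.LiftingGraph s (Multigraph.tauA A ℓ)) I2)
    (hmax1 : ∀ J, Multigraph.IndepIn (G.LiftingGraph s (Multigraph.tauA A ℓ)) J →
      I1 ⊆ J → J = I1)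
    (hmax2 : ∀ J, Multigraph.IndepIn (G.LiftingGraph s (Multigraph.tauA A ℓ)) J →
      I2 ⊆ J → J = I2)
    (hs1 : 2 ≤ I1.ncard) (hs2 : 2 ≤ I2.ncard)
    (D1 D2 : Set V)
    (hD1 : G.DangerousA A ℓ D1) (hD2 : G.DangerousA A ℓ D2)
    (hsD1 : s ∉ D1) (hsD2 : s ∉ D2)
    (hI1D1 : ∀ e : {e : E // G.Inc e s}, e ∈ I1 ↔ G.other s e.1 ∈ D1)
    (hI2D2 : ∀ e : {e : E // G.Inc e s}, e ∈ I2 ↔ G.other s e.1 ∈ D2) :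
    (I1 ∩ I2).ncard ≤ 1 ∧
      (((I1 ∩ I2).ncard = 1 ∧ I1 ∪ I2 ≠ Set.univ) → Odd ℓ) :=
  stmt8_general G ℓ A hconnA hedge s hs I1 I2 hne hI1 hI2 hmax1 hmax2 D1 D2 hD1 hD2 hsD1 hsD2 hI1D1
    hI2D2
end
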